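/- arXiv:0906.0601 — 8 statements merged into one kernel-verified Lean document; each statement's English description precedes it below -/
import Mathlib

section
/- Let α ∈ (0, π/4), let λ ∈ ℂ with |λ| ≤ sin α, and let t ∈ [0, 1]. Then 1 + λt ≠ 0, Re((1 + λt)^{−2}) ≥ cos(2α)/4, and consequently for every n ∈ ℕ and every vector ξ = (ξ₁, …, ξ_{n+1}) ∈ ℝ^{n+1} one has Re(ξ₁²·(1 + λt)^{−2} + ξ₂² + ⋯ + ξ_{n+1}²) ≥ (cos(2α)/4)·‖ξ‖², where ‖ξ‖² = ξ₁² + ⋯ + ξ_{n+1}². -/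
/-!
Write `z = 1 + λt`, so `‖z - 1‖ ≤ sin α`. Since `Im z = Im (z̄ (z - 1))`, the sine of the argument
of `z` is at most `‖z - 1‖`, hence `cos (2 arg z) ≥ 1 - 2 sin² α = cos 2α ≥ 0`; together with
`‖z‖ ≤ 1 + sin α < 2` this gives `Re z⁻² = cos (2 arg z) / ‖z‖² ≥ cos 2α / 4`.
As `cos 2α / 4 ≤ 1`, the quadratic form is then bounded termwise.
-/

open Real Complex Finset

open scoped ComplexConjugate

namespace Complex

theorem one_add_ne_zero_of_norm_lt_one {w : ℂ} (hw : ‖w‖ < 1) : 1 + w ≠ 0 := fun h => by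
  simp [eq_neg_of_add_eq_zero_right h] at hw

theorem abs_im_le_norm_mul_norm_sub_one (z : ℂ) : |z.im| ≤ ‖z‖ * ‖z - 1‖ := by
  have him : z.im = (conj z * (z - 1)).im := by
    simp only [mul_im, conj_re, conj_im, sub_re, sub_im, one_re, one_im]
    ring
  rw [him, ← norm_conj z, ← norm_mul]
  exact abs_im_le_norm _

theorem re_inv_sq (z : ℂ) : ((z ^ 2)⁻¹).re = (‖z‖ ^ 2 - 2 * z.im ^ 2) / ‖z‖ ^ 4 := by
  have hN : ‖z‖ ^ 2 = z.re ^ 2 + z.im ^ 2 := by rw [Complex.sq_norm, normSq_apply]; ring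
  rw [show ‖z‖ ^ 4 = (‖z‖ ^ 2) ^ 2 by ring, inv_re, map_pow, normSq_eq_norm_sq, sq z, mul_re, hN]
  ring

theorem one_sub_two_mul_norm_sub_one_sq_div_le_re_inv_sq (z : ℂ) :
    (1 - 2 * ‖z - 1‖ ^ 2) / ‖z‖ ^ 2 ≤ ((z ^ 2)⁻¹).re := by
  rcases eq_or_ne z 0 with rfl | hz
  · simp
  have him : z.im ^ 2 ≤ ‖z‖ ^ 2 * ‖z - 1‖ ^ 2 := by
    rw [← mul_pow, ← sq_abs]
    exact pow_le_pow_left₀ (abs_nonneg _) (abs_im_le_norm_mul_norm_sub_one z) 2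
  have hN : 0 < ‖z‖ ^ 2 := by positivity
  rw [re_inv_sq, show ‖z‖ ^ 4 = ‖z‖ ^ 2 * ‖z‖ ^ 2 by ring, ← div_div,
    div_le_div_iff_of_pos_right hN, le_div_iff₀ hN]
  linarith

theorem one_sub_two_mul_norm_sq_div_four_le_re_inv_one_add_sq {w : ℂ} (hw : 2 * ‖w‖ ^ 2 ≤ 1) :
    (1 - 2 * ‖w‖ ^ 2) / 4 ≤ (((1 + w) ^ 2)⁻¹).re := by
  have hw1 : ‖w‖ < 1 := by nlinarith [norm_nonneg w]
  have hpos : 0 < ‖1 + w‖ := norm_pos_iff.2 (one_add_ne_zero_of_norm_lt_one hw1)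
  have hle : ‖1 + w‖ ^ 2 ≤ 4 := by nlinarith [norm_add_le 1 w, norm_one (α := ℂ)]
  have hre := one_sub_two_mul_norm_sub_one_sq_div_le_re_inv_sq (1 + w)
  rw [add_sub_cancel_left] at hre
  exact (div_le_div_of_nonneg_left (by linarith) (pow_pos hpos 2) hle).trans hre

end Complex

theorem mul_sum_sq_le_re_sq_mul_add_sum_sq {ι : Type*} [Fintype ι] [DecidableEq ι] (i₀ : ι)
    {c : ℂ} {κ : ℝ} (hc : κ ≤ c.re) (hκ : κ ≤ 1) (ξ : ι → ℝ) :
    κ * ∑ i, ξ i ^ 2 ≤ ((ξ i₀ : ℂ) ^ 2 * c + ∑ i ∈ univ \ {i₀}, (ξ i : ℂ) ^ 2).re := by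
  have hre : ((ξ i₀ : ℂ) ^ 2 * c + ∑ i ∈ univ \ {i₀}, (ξ i : ℂ) ^ 2).re
      = ξ i₀ ^ 2 * c.re + ∑ i ∈ univ \ {i₀}, ξ i ^ 2 := by
    simp only [← ofReal_pow, add_re, re_ofReal_mul, re_sum, ofReal_re]
  have hrest : 0 ≤ ∑ i ∈ univ \ {i₀}, ξ i ^ 2 := sum_nonneg fun i _ => sq_nonneg _
  rw [hre, sum_eq_add_sum_sdiff_singleton_of_mem (mem_univ i₀), mul_add]
  linarith [mul_le_mul_of_nonneg_left hc (sq_nonneg (ξ i₀)), mul_le_of_le_one_left hrest hκ]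

theorem strong_ellipticity_symbol (α : ℝ) (hα : α ∈ Set.Ioo 0 (Real.pi / 4))
    (lam : ℂ) (hlam : ‖lam‖ ≤ Real.sin α) (t : ℝ) (ht : t ∈ Set.Icc (0 : ℝ) 1) :
    (1 + lam * t ≠ 0) ∧
    (((1 + lam * t) ^ 2)⁻¹.re ≥ Real.cos (2 * α) / 4) ∧
    (∀ n : ℕ, ∀ ξ : Fin (n + 1) → ℝ,
      (((ξ 0 : ℂ)) ^ 2 * ((1 + lam * t) ^ 2)⁻¹
        + ∑ i ∈ Finset.univ \ {0}, ((ξ i : ℂ)) ^ 2).re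
      ≥ (Real.cos (2 * α) / 4) * ∑ i, (ξ i) ^ 2) := by
  have hcos : 0 ≤ Real.cos (2 * α) :=
    Real.cos_nonneg_of_mem_Icc ⟨by linarith [hα.1, Real.pi_pos], by linarith [hα.2]⟩
  have hw : ‖lam * t‖ ≤ Real.sin α := by
    rw [norm_mul, norm_real, Real.norm_of_nonneg ht.1]
    exact (mul_le_of_le_one_right (norm_nonneg _) ht.2).trans hlam
  have hw2 : ‖lam * t‖ ^ 2 ≤ Real.sin α ^ 2 := pow_le_pow_left₀ (norm_nonneg _) hw 2
  rw [Real.cos_two_mul_eq_one_sub] at hcos ⊢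
  have hre : (1 - 2 * Real.sin α ^ 2) / 4 ≤ (((1 + lam * t) ^ 2)⁻¹).re :=
    (div_le_div_of_nonneg_right (by linarith) (by norm_num)).trans
      (one_sub_two_mul_norm_sq_div_four_le_re_inv_one_add_sq (by linarith))
  refine ⟨one_add_ne_zero_of_norm_lt_one (by nlinarith [norm_nonneg (lam * t)]), hre,
    fun n ξ => mul_sum_sq_le_re_sq_mul_add_sum_sq 0 hre (by nlinarith) ξ⟩
end

section
/- Let α ∈ (0, π/4), let λ ∈ ℂ with |λ| ≤ sin α, let t ∈ [0, 1], let n ∈ ℕ, and let Z = (Z₁, …, Z_{n+1}) ∈ ℂ^{n+1} be a nonzero vector. Set w = (1 + λt)^{−2}·|Z₁|² + |Z₂|² + ⋯ + |Z_{n+1}|². Then Re w ≥ (cos(2α)/4)·‖Z‖², |w| ≥ (cos(2α)/4)·‖Z‖², and |arg w| ≤ 2α, where ‖Z‖² = |Z₁|² + ⋯ + |Z_{n+1}|². -/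
/-!
The point μ = 1 + λt lies in the closed disc of radius sin α about 1, which is seen from the
origin under the half-angle α. Hence μ lies in the closed sector of half-angle α around the
positive axis, and μ⁻² in that of half-angle 2α. As 2α < π/2 this sector is a convex cone, so
w = μ⁻² |Z₁|² + (|Z₂|² + ⋯ + |Z_{n+1}|²) lies in it as well, which bounds arg w. In that sector
Re ζ ≥ cos(2α) |ζ|, and |μ⁻²| ≥ 1/4 because |μ| ≤ 1 + sin α ≤ 2; this gives the bound on Re w.
-/

open Real Complex Finset

/-- For `0 ≤ θ ≤ π` this is `0` together with the `z` with `|arg z| ≤ θ`. -/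
def closedSector (θ : ℝ) : Set ℂ := {z | Real.cos θ * ‖z‖ ≤ z.re}

section closedSector

variable {θ : ℝ} {z ζ : ℂ}

lemma mem_closedSector : z ∈ closedSector θ ↔ Real.cos θ * ‖z‖ ≤ z.re := Iff.rfl

lemma abs_arg_le_of_mem_closedSector (hz : z ∈ closedSector θ) (hθ₀ : 0 ≤ θ) (hθπ : θ ≤ π) :
    |arg z| ≤ θ := by
  rcases eq_or_ne z 0 with rfl | hz₀
  · simpa using hθ₀
  have hcos : Real.cos θ ≤ Real.cos |arg z| := by
    rw [Real.cos_abs]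
    refine le_of_mul_le_mul_left ?_ (norm_pos_iff.2 hz₀)
    rw [norm_mul_cos_arg, mul_comm]
    exact hz
  exact (strictAntiOn_cos.le_iff_ge ⟨hθ₀, hθπ⟩ ⟨abs_nonneg _, abs_arg_le_pi z⟩).1 hcos

lemma ofReal_mem_closedSector {r : ℝ} (hr : 0 ≤ r) : (r : ℂ) ∈ closedSector θ := by
  rw [mem_closedSector, norm_real, Real.norm_of_nonneg hr, ofReal_re]
  nlinarith [Real.cos_le_one θ]

lemma mul_ofReal_mem_closedSector (hz : z ∈ closedSector θ) {r : ℝ} (hr : 0 ≤ r) :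
    z * r ∈ closedSector θ := by
  rw [mem_closedSector, norm_mul, norm_real, Real.norm_of_nonneg hr, re_mul_ofReal, ← mul_assoc]
  exact mul_le_mul_of_nonneg_right hz hr

lemma add_mem_closedSector (hθ : 0 ≤ Real.cos θ) (hz : z ∈ closedSector θ)
    (hζ : ζ ∈ closedSector θ) : z + ζ ∈ closedSector θ :=
  calc Real.cos θ * ‖z + ζ‖ ≤ Real.cos θ * (‖z‖ + ‖ζ‖) := by gcongr; exact norm_add_le z ζ
    _ ≤ (z + ζ).re := by rw [add_re, mul_add]; exact add_le_add hz hζ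

lemma inv_mem_closedSector (hz : z ∈ closedSector θ) : z⁻¹ ∈ closedSector θ := by
  rw [mem_closedSector, norm_inv, inv_re, normSq_eq_norm_sq]
  rcases eq_or_ne ‖z‖ 0 with h | h
  · simp [h]
  calc Real.cos θ * ‖z‖⁻¹ = Real.cos θ * ‖z‖ / ‖z‖ ^ 2 := by field_simp
    _ ≤ z.re / ‖z‖ ^ 2 := by gcongr; exact hz

lemma sq_mem_closedSector_two_mul (hθ : 0 ≤ Real.cos θ) (hz : z ∈ closedSector θ) :
    z ^ 2 ∈ closedSector (2 * θ) := by
  have h := pow_le_pow_left₀ (mul_nonneg hθ (norm_nonneg z)) hz 2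
  rw [mul_pow, Complex.sq_norm, normSq_apply] at h
  rw [mem_closedSector, norm_pow, Complex.sq_norm, normSq_apply, Real.cos_two_mul, sq z, mul_re]
  linarith

lemma mem_closedSector_of_norm_sub_one_le_sin (hz : ‖z - 1‖ ≤ Real.sin θ) :
    z ∈ closedSector θ := by
  have h := pow_le_pow_left₀ (norm_nonneg _) hz 2
  have hexpand : ‖z - 1‖ ^ 2 = ‖z‖ ^ 2 - 2 * z.re + 1 := by
    simp only [Complex.sq_norm, normSq_apply, sub_re, sub_im, one_re, one_im]; ring
  rw [mem_closedSector]
  -- `2 Re z ≥ ‖z‖² + 1 - sin² θ = ‖z‖² + cos² θ ≥ 2 cos θ ‖z‖`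
  nlinarith [sq_nonneg (‖z‖ - Real.cos θ), Real.sin_sq_add_cos_sq θ]

lemma mul_le_re_mul_ofReal_add_ofReal {m a b : ℝ} (hζ : ζ ∈ closedSector θ)
    (hθ : 0 ≤ Real.cos θ) (hm : m ≤ ‖ζ‖) (hm₁ : Real.cos θ * m ≤ 1) (ha : 0 ≤ a) (hb : 0 ≤ b) :
    Real.cos θ * m * (a + b) ≤ (ζ * a + b).re := by
  have hζa : Real.cos θ * m * a ≤ ζ.re * a :=
    mul_le_mul_of_nonneg_right ((mul_le_mul_of_nonneg_left hm hθ).trans hζ) ha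
  rw [add_re, re_mul_ofReal, ofReal_re, mul_add]
  nlinarith

end closedSector

theorem numerical_range_diagonal_general (α : ℝ) (hα : α ∈ Set.Ioo 0 (Real.pi / 4))
    (lam : ℂ) (hlam : ‖lam‖ ≤ Real.sin α) (t : ℝ) (ht : t ∈ Set.Icc (0 : ℝ) 1)
    (n : ℕ) (Z : Fin (n + 1) → ℂ)
    (w : ℂ)
    (hw : w = ((1 + lam * t) ^ 2)⁻¹ * ((‖Z 0‖ : ℂ)) ^ 2
        + ∑ i ∈ Finset.univ \ {0}, ((‖Z i‖ : ℂ)) ^ 2) :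
    w.re ≥ (Real.cos (2 * α) / 4) * ∑ i, ‖Z i‖ ^ 2 ∧
    ‖w‖ ≥ (Real.cos (2 * α) / 4) * ∑ i, ‖Z i‖ ^ 2 ∧
    |Complex.arg w| ≤ 2 * α := by
  obtain ⟨hα₀, hα₁⟩ := hα
  have hcos : 0 < Real.cos (2 * α) := Real.cos_pos_of_mem_Ioo ⟨by linarith, by linarith⟩
  have hsin : Real.sin α < 1 := (Real.sin_lt hα₀).trans_le (by linarith [Real.pi_le_four])
  set μ : ℂ := 1 + lam * t
  have hμ : ‖μ - 1‖ ≤ Real.sin α :=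
    calc ‖μ - 1‖ = ‖lam‖ * |t| := by simp [μ]
      _ ≤ ‖lam‖ := mul_le_of_le_one_right (norm_nonneg _) (abs_le.2 ⟨by linarith [ht.1], ht.2⟩)
      _ ≤ Real.sin α := hlam
  have hμ₀ : 0 < ‖μ‖ := by linarith [norm_sub_norm_le 1 μ, norm_sub_rev μ 1, norm_one (α := ℂ)]
  have hμ₂ : ‖μ‖ ≤ 2 := by linarith [norm_le_norm_add_norm_sub' μ 1, norm_one (α := ℂ)]
  have hζ : (μ ^ 2)⁻¹ ∈ closedSector (2 * α) :=
    inv_mem_closedSector <| sq_mem_closedSector_two_mul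
      (Real.cos_nonneg_of_mem_Icc ⟨by linarith, by linarith⟩)
      (mem_closedSector_of_norm_sub_one_le_sin hμ)
  have hζ_norm : 4⁻¹ ≤ ‖(μ ^ 2)⁻¹‖ := by
    rw [norm_inv, norm_pow]
    exact inv_anti₀ (by positivity) (by nlinarith)
  have hw' : w = (μ ^ 2)⁻¹ * (‖Z 0‖ ^ 2 : ℝ) + (∑ i ∈ univ \ {0}, ‖Z i‖ ^ 2 : ℝ) := by
    rw [hw]; push_cast; rfl
  have hre : Real.cos (2 * α) / 4 * ∑ i, ‖Z i‖ ^ 2 ≤ w.re := by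
    rw [sum_eq_add_sum_sdiff_singleton_of_mem (mem_univ 0), hw', div_eq_mul_inv]
    exact mul_le_re_mul_ofReal_add_ofReal hζ hcos.le hζ_norm
      (by linarith [Real.cos_le_one (2 * α)]) (by positivity) (sum_nonneg fun _ _ ↦ by positivity)
  refine ⟨hre, hre.trans (re_le_norm w), abs_arg_le_of_mem_closedSector ?_ (by linarith)
    (by linarith [Real.pi_pos])⟩
  rw [hw']
  exact add_mem_closedSector hcos.le (mul_ofReal_mem_closedSector hζ (by positivity))
    (ofReal_mem_closedSector (sum_nonneg fun _ _ ↦ by positivity))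

theorem numerical_range_diagonal (α : ℝ) (hα : α ∈ Set.Ioo 0 (Real.pi / 4))
    (lam : ℂ) (hlam : ‖lam‖ ≤ Real.sin α) (t : ℝ) (ht : t ∈ Set.Icc (0 : ℝ) 1)
    (n : ℕ) (Z : Fin (n + 1) → ℂ) (hZ : Z ≠ 0)
    (w : ℂ)
    (hw : w = ((1 + lam * t) ^ 2)⁻¹ * ((‖Z 0‖ : ℂ)) ^ 2
        + ∑ i ∈ Finset.univ \ {0}, ((‖Z i‖ : ℂ)) ^ 2) :
    w.re ≥ (Real.cos (2 * α) / 4) * ∑ i, ‖Z i‖ ^ 2 ∧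
    ‖w‖ ≥ (Real.cos (2 * α) / 4) * ∑ i, ‖Z i‖ ^ 2 ∧
    |Complex.arg w| ≤ 2 * α :=
  numerical_range_diagonal_general α hα lam hlam t ht n Z w hw
end

section
/- Let ε ∈ (0, 1/2], let λ ∈ ℂ with |λ|² ≤ 1/2 − ε, let x ≥ 0 be real, and let u ∈ [0, x]. Then the complex number z = x + λu satisfies: (Re z)² − (Im z)² ≥ ε·x², Re z ≥ (1 − 2^{−1/2})·x, and |Im z| ≤ (1 + 2ε)^{−1/2}·Re z. -/
/-!
With `λ = a + b i` we have `Re z = x + a u` and `Im z = b u`. The hyperbolic bound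
`(Re z)² - (Im z)² ≥ ε x²` comes from completing a square; because `(Im z)² ≤ x² / 2`, its margin
`ε x²` dominates `2 ε (Im z)²`, which is the sector bound `(1 + 2ε) (Im z)² ≤ (Re z)²`.
-/

open Real Complex

theorem sq_re_add_sq_im_eq_sq_norm (z : ℂ) : z.re ^ 2 + z.im ^ 2 = ‖z‖ ^ 2 := by
  rw [norm_eq_sqrt_sq_add_sq, sq_sqrt (by positivity)]

theorem re_ofReal_add_mul_ofReal (x u : ℝ) (lam : ℂ) :
    ((x : ℂ) + lam * u).re = x + lam.re * u := by
  simp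

theorem im_ofReal_add_mul_ofReal (x u : ℝ) (lam : ℂ) :
    ((x : ℂ) + lam * u).im = lam.im * u := by
  simp

/-- Completing the square in `a u + x / 2` leaves `(1/2 - ε) (x² - u²) ≥ 0`. -/
theorem mul_sq_le_sq_add_mul_sub_sq {ε a b x u : ℝ} (hab : a ^ 2 + b ^ 2 ≤ 1 / 2 - ε)
    (hu : |u| ≤ x) : ε * x ^ 2 ≤ (x + a * u) ^ 2 - (b * u) ^ 2 := by
  have hux : u ^ 2 ≤ x ^ 2 := sq_le_sq' (abs_le.1 hu).1 (abs_le.1 hu).2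
  nlinarith [sq_nonneg (a * u + x / 2), mul_nonneg (sub_nonneg.2 hux) (by nlinarith : 0 ≤ 1 / 2 - ε),
    mul_nonneg (sub_nonneg.2 hab) (sq_nonneg u)]

theorem one_sub_mul_le_add_mul {a c x u : ℝ} (ha : |a| ≤ c) (hu : |u| ≤ x) :
    (1 - c) * x ≤ x + a * u := by
  have hau : |a * u| ≤ c * x := by
    rw [abs_mul]; exact mul_le_mul ha hu (abs_nonneg u) ((abs_nonneg a).trans ha)
  linarith [neg_abs_le (a * u)]

theorem abs_le_inv_sqrt_mul_of_mul_sq_le {t p q : ℝ} (hp : 0 ≤ p) (ht : 0 < t)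
    (h : t * q ^ 2 ≤ p ^ 2) : |q| ≤ (√t)⁻¹ * p := by
  rw [inv_mul_eq_div, le_div_iff₀ (sqrt_pos.2 ht), ← sqrt_sq_eq_abs, ← sqrt_mul (sq_nonneg q),
    mul_comm, ← sqrt_sq hp]
  exact sqrt_le_sqrt h

theorem abs_le_inv_sqrt_two_of_sq_add_sq_le {a b : ℝ} (h : a ^ 2 + b ^ 2 ≤ 1 / 2) :
    |a| ≤ (√2)⁻¹ := by
  rw [← sqrt_inv, inv_eq_one_div]
  exact abs_le_sqrt (by nlinarith [sq_nonneg b])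

theorem sq_mul_le_half_sq {b x u : ℝ} (hb : b ^ 2 ≤ 1 / 2) (hu : |u| ≤ x) :
    (b * u) ^ 2 ≤ x ^ 2 / 2 := by
  have hux : u ^ 2 ≤ x ^ 2 := sq_le_sq' (abs_le.1 hu).1 (abs_le.1 hu).2
  rw [mul_pow]
  nlinarith [mul_le_mul hb hux (sq_nonneg u) (by norm_num)]

theorem one_add_two_mul_mul_sq_le_sq {ε a b x u : ℝ} (hε : 0 ≤ ε)
    (hab : a ^ 2 + b ^ 2 ≤ 1 / 2 - ε) (hu : |u| ≤ x) :
    (1 + 2 * ε) * (b * u) ^ 2 ≤ (x + a * u) ^ 2 := by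
  have hbu := sq_mul_le_half_sq (b := b) (by nlinarith [sq_nonneg a]) hu
  nlinarith [mul_sq_le_sq_add_mul_sub_sq hab hu, mul_le_mul_of_nonneg_left hbu hε]

theorem scaled_point_sector_general (ε : ℝ) (hε : ε ∈ Set.Ioc 0 (1 / 2 : ℝ))
    (lam : ℂ) (hlam : ‖lam‖ ^ 2 ≤ 1 / 2 - ε)
    (x : ℝ) (u : ℝ) (hu : u ∈ Set.Icc 0 x) :
    (((x : ℂ) + lam * u).re ^ 2 - ((x : ℂ) + lam * u).im ^ 2 ≥ ε * x ^ 2) ∧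
    (((x : ℂ) + lam * u).re ≥ (1 - (Real.sqrt 2)⁻¹) * x) ∧
    |((x : ℂ) + lam * u).im| ≤ (Real.sqrt (1 + 2 * ε))⁻¹ * ((x : ℂ) + lam * u).re := by
  obtain ⟨hε0, -⟩ := hε
  rw [re_ofReal_add_mul_ofReal, im_ofReal_add_mul_ofReal]
  have hux : |u| ≤ x := abs_le.2 ⟨by linarith [hu.1, hu.2], hu.2⟩
  have hab : lam.re ^ 2 + lam.im ^ 2 ≤ 1 / 2 - ε := (sq_re_add_sq_im_eq_sq_norm lam).trans_le hlam
  have hre := one_sub_mul_le_add_mul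
    (abs_le_inv_sqrt_two_of_sq_add_sq_le (hab.trans (by linarith))) hux
  have hre0 : 0 ≤ x + lam.re * u := hre.trans' <| mul_nonneg
    (sub_nonneg.2 (inv_le_one_of_one_le₀ one_lt_sqrt_two.le)) ((abs_nonneg u).trans hux)
  exact ⟨mul_sq_le_sq_add_mul_sub_sq hab hux, hre, abs_le_inv_sqrt_mul_of_mul_sq_le hre0
    (by linarith) (one_add_two_mul_mul_sq_le_sq hε0.le hab hux)⟩

theorem scaled_point_sector (ε : ℝ) (hε : ε ∈ Set.Ioc 0 (1 / 2 : ℝ))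
    (lam : ℂ) (hlam : ‖lam‖ ^ 2 ≤ 1 / 2 - ε)
    (x : ℝ) (hx : 0 ≤ x) (u : ℝ) (hu : u ∈ Set.Icc 0 x) :
    (((x : ℂ) + lam * u).re ^ 2 - ((x : ℂ) + lam * u).im ^ 2 ≥ ε * x ^ 2) ∧
    (((x : ℂ) + lam * u).re ≥ (1 - (Real.sqrt 2)⁻¹) * x) ∧
    |((x : ℂ) + lam * u).im| ≤ (Real.sqrt (1 + 2 * ε))⁻¹ * ((x : ℂ) + lam * u).re :=
  scaled_point_sector_general ε hε lam hlam x u hu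
end

section
/- Let H be a complex separable Hilbert space, let R > 0, let v : ℝ → ℝ be a smooth function with v(x) = 0 for x ≤ R and 0 ≤ v'(x) ≤ 1 for all x, and let f : ℂ → H be an entire function such that for every ε ∈ (0, 1) and every n ∈ ℕ the quantity (Re z)^n·‖f(z)‖_H tends to 0 as Re z → +∞ uniformly on the sector {z ∈ ℂ : |Im z| ≤ (1 − ε)·Re z}. Then for every λ ∈ ℂ with |λ| < 2^{−1/2} the function x ↦ f(x + λ·v(x)) belongs to L²((0, ∞); H), and the map λ ↦ (x ↦ f(x + λ·v(x))), from the open disc {λ ∈ ℂ : |λ| < 2^{−1/2}} to L²((0, ∞); H), is analytic. -/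
open Real Complex MeasureTheory Set

private lemma abs_re_add_abs_im_le' (z : ℂ) :
    |z.re| + |z.im| ≤ Real.sqrt 2 * ‖z‖ := by
  have hn : ‖z‖ ^ 2 = z.re ^ 2 + z.im ^ 2 := by
    rw [Complex.sq_norm, Complex.normSq_apply]; ring
  have h1 : (|z.re| + |z.im|) ^ 2 ≤ (Real.sqrt 2 * ‖z‖) ^ 2 := by
    rw [mul_pow, Real.sq_sqrt (by norm_num : (0:ℝ) ≤ 2), hn]
    nlinarith [_root_.sq_abs z.re, _root_.sq_abs z.im, sq_nonneg (|z.re| - |z.im|)]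
  have h2 := Real.sqrt_le_sqrt h1
  rwa [Real.sqrt_sq (by positivity), Real.sqrt_sq (by positivity)] at h2

private lemma sector_ineq (a x p q V : ℝ) (ha0 : 0 < a) (hx : 0 < x)
    (hp : 0 ≤ p) (hq : 0 ≤ q) (hV0 : 0 ≤ V) (hVx : V ≤ x)
    (hsv : (p + q) * V ≤ (1 - a) * x) :
    q * V + 2*(a/8)*x ≤ (1 - a/4) * (x - p * V - 2*(a/8)*x) := by
  nlinarith [mul_nonneg hp hV0, mul_nonneg hq hV0, mul_pos ha0 hx,
    mul_nonneg (mul_nonneg ha0.le hp) hV0,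
    mul_nonneg (mul_nonneg ha0.le ha0.le) hx.le, hsv]

set_option maxHeartbeats 3000000 in
private lemma key_bound {H : Type*} [NormedAddCommGroup H] [NormedSpace ℂ H] [CompleteSpace H]
    (v : ℝ → ℝ) (hvc : Continuous v)
    (hv_nonneg : ∀ x, 0 ≤ v x) (hv_le : ∀ x, 0 ≤ x → v x ≤ x)
    (f : ℂ → H) (hf : Differentiable ℂ f)
    (hdecay : ∀ ε ∈ Set.Ioo (0 : ℝ) 1, ∀ n : ℕ, ∀ δ > (0 : ℝ), ∃ T : ℝ, ∀ z : ℂ,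
      |z.im| ≤ (1 - ε) * z.re → T ≤ z.re → z.re ^ n * ‖f z‖ < δ)
    (s : ℝ) (hs0 : 0 ≤ s) (hs : s < (Real.sqrt 2)⁻¹) :
    ∃ g : ℝ → ℝ, MemLp g 2 (volume.restrict (Set.Ioi (0:ℝ))) ∧ (∀ x, 0 ≤ g x) ∧
      ∀ lam : ℂ, ‖lam‖ ≤ s → ∀ x : ℝ, 0 < x →
        ‖f ((x:ℂ) + lam * v x)‖ ≤ g x ∧
        v x * ‖deriv f ((x:ℂ) + lam * v x)‖ ≤ g x ∧
        (v x)^2 * ‖deriv (deriv f) ((x:ℂ) + lam * v x)‖ ≤ g x := by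
  have hsqrt2 : (1:ℝ) < Real.sqrt 2 := by
    nlinarith [Real.sq_sqrt (by norm_num : (0:ℝ) ≤ 2), Real.sqrt_nonneg 2]
  have hsqrt2' : Real.sqrt 2 < 3/2 := by
    nlinarith [Real.sq_sqrt (by norm_num : (0:ℝ) ≤ 2), Real.sqrt_nonneg 2]
  have hs2 : Real.sqrt 2 * s < 1 := by
    have h := mul_lt_mul_of_pos_left hs (show (0:ℝ) < Real.sqrt 2 by linarith)
    rwa [mul_inv_cancel₀ (by positivity)] at h
  obtain ⟨a, ha_def⟩ : ∃ a : ℝ, a = 1 - Real.sqrt 2 * s := ⟨_, rfl⟩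
  have ha0 : 0 < a := by rw [ha_def]; linarith
  have ha1 : a ≤ 1 := by
    have : 0 ≤ Real.sqrt 2 * s := by positivity
    rw [ha_def]; linarith
  obtain ⟨ε, hε_def⟩ : ∃ ε : ℝ, ε = a/4 := ⟨_, rfl⟩
  obtain ⟨c, hc_def⟩ : ∃ c : ℝ, c = a/8 := ⟨_, rfl⟩
  have hc0 : 0 < c := by rw [hc_def]; positivity
  have hs1 : s < 1 := by nlinarith
  have hkey_s : (4 - Real.sqrt 2) * s ≤ 2 := by
    nlinarith [mul_pos (show (0:ℝ) < 2*Real.sqrt 2 - 1 by linarith)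
      (show (0:ℝ) < 1 - Real.sqrt 2 * s by linarith),
      Real.sq_sqrt (by norm_num : (0:ℝ) ≤ 2)]
  -- sector lemma
  have hsec : ∀ lam : ℂ, ‖lam‖ ≤ s → ∀ x : ℝ, 0 < x → ∀ w : ℂ,
      ‖w - ((x:ℂ) + lam * v x)‖ ≤ 2*c*x → |w.im| ≤ (1-ε) * w.re ∧ x/4 ≤ w.re := by
    intro lam hlam x hx w hw
    set d : ℂ := w - ((x:ℂ) + lam * v x) with hd
    have hweq : w = ((x:ℂ) + lam * v x) + d := by rw [hd]; ring
    have hwre : w.re = x + lam.re * v x + d.re := by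
      rw [hweq]; simp [Complex.add_re, Complex.mul_re]
    have hwim : w.im = lam.im * v x + d.im := by
      rw [hweq]; simp [Complex.add_im, Complex.mul_im]
    have hdre : |d.re| ≤ 2*c*x := le_trans (Complex.abs_re_le_norm d) hw
    have hdim : |d.im| ≤ 2*c*x := le_trans (Complex.abs_im_le_norm d) hw
    have hp : |lam.re| ≤ s := le_trans (Complex.abs_re_le_norm lam) hlam
    have hsum : |lam.re| + |lam.im| ≤ 1 - a := by
      have h := abs_re_add_abs_im_le' lam
      have h2 : Real.sqrt 2 * ‖lam‖ ≤ Real.sqrt 2 * s :=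
        mul_le_mul_of_nonneg_left hlam (Real.sqrt_nonneg 2)
      rw [ha_def]; linarith
    have hV0 : 0 ≤ v x := hv_nonneg x
    have hVx : v x ≤ x := hv_le x hx.le
    have hwre_ge : x - |lam.re| * v x - 2*c*x ≤ w.re := by
      have h1 : -|lam.re| * v x ≤ lam.re * v x :=
        mul_le_mul_of_nonneg_right (neg_abs_le lam.re) hV0
      have h2 : -(2*c*x) ≤ d.re := neg_le_of_abs_le hdre
      rw [hwre]; linarith
    have hgoal2 : x/4 ≤ w.re := by
      have h1 : |lam.re| * v x ≤ s * x :=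
        mul_le_mul hp hVx hV0 hs0
      have hslack : 0 ≤ x * (2 - (4 - Real.sqrt 2) * s) :=
        mul_nonneg hx.le (by linarith)
      rw [hc_def, ha_def] at hwre_ge
      nlinarith [hwre_ge, h1]
    refine ⟨?_, hgoal2⟩
    have hε1 : (0:ℝ) ≤ 1 - ε := by rw [hε_def]; linarith
    have him : |w.im| ≤ |lam.im| * v x + 2*c*x := by
      rw [hwim]
      calc |lam.im * v x + d.im| ≤ |lam.im * v x| + |d.im| := abs_add_le _ _
        _ ≤ |lam.im| * v x + 2*c*x := by
            rw [abs_mul, _root_.abs_of_nonneg hV0]; linarith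
    have hkey1 : |lam.im| * v x + 2*c*x ≤ (1-ε) * (x - |lam.re| * v x - 2*c*x) := by
      have hsv : (|lam.re| + |lam.im|) * v x ≤ (1 - a) * x :=
        mul_le_mul hsum hVx hV0 (by linarith)
      rw [hε_def, hc_def]
      exact sector_ineq a x _ _ _ ha0 hx (abs_nonneg _) (abs_nonneg _) hV0 hVx hsv
    calc |w.im| ≤ |lam.im| * v x + 2*c*x := him
      _ ≤ (1-ε) * (x - |lam.re| * v x - 2*c*x) := hkey1
      _ ≤ (1-ε) * w.re := mul_le_mul_of_nonneg_left hwre_ge hε1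
  -- decay
  obtain ⟨T, hT⟩ := hdecay ε ⟨by rw [hε_def]; positivity, by rw [hε_def]; linarith⟩ 2 1 one_pos
  obtain ⟨X, hX_def⟩ : ∃ X : ℝ, X = max 1 (4*|T|+4) := ⟨_, rfl⟩
  have hX1 : (1:ℝ) ≤ X := by rw [hX_def]; exact le_max_left _ _
  have hX0 : (0:ℝ) < X := by linarith
  have hXT : ∀ x : ℝ, X ≤ x → T ≤ x/4 := by
    intro x hxX
    have h0 : max 1 (4*|T|+4) ≤ x := by rw [← hX_def]; exact hxX
    have h1 : 4*|T|+4 ≤ x := le_trans (le_max_right _ _) h0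
    have h2 : T ≤ |T| := le_abs_self T
    linarith
  have hbound : ∀ lam : ℂ, ‖lam‖ ≤ s → ∀ x : ℝ, X ≤ x → ∀ w : ℂ,
      ‖w - ((x:ℂ) + lam * v x)‖ ≤ 2*c*x → ‖f w‖ ≤ 16/x^2 := by
    intro lam hlam x hxX w hw
    have hx : (0:ℝ) < x := lt_of_lt_of_le one_pos (le_trans hX1 hxX)
    obtain ⟨hsec1, hsec2⟩ := hsec lam hlam x hx w hw
    have hfw : w.re ^ 2 * ‖f w‖ < 1 := hT w hsec1 (le_trans (hXT x hxX) hsec2)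
    have h1 : (0:ℝ) < w.re := by linarith
    have h2 : ‖f w‖ ≤ 1 / w.re^2 := by
      rw [le_div_iff₀ (by positivity)]
      nlinarith [hfw]
    refine le_trans h2 ?_
    rw [div_le_div_iff₀ (by positivity) (by positivity)]
    nlinarith [mul_nonneg (sub_nonneg.2 hsec2) (show (0:ℝ) ≤ w.re + x/4 by linarith)]
  -- differentiability of derivatives
  have hfa : AnalyticOnNhd ℂ f Set.univ :=
    hf.differentiableOn.analyticOnNhd isOpen_univ
  have hf' : Differentiable ℂ (deriv f) := fun z =>
    ((hfa.deriv) z (Set.mem_univ z)).differentiableAt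
  have hf'' : Differentiable ℂ (deriv (deriv f)) := fun z =>
    ((hfa.deriv.deriv) z (Set.mem_univ z)).differentiableAt
  -- Cauchy estimates
  have hC1 : ∀ lam : ℂ, ‖lam‖ ≤ s → ∀ x : ℝ, X ≤ x → ∀ w : ℂ,
      ‖w - ((x:ℂ) + lam * v x)‖ ≤ c*x → ‖deriv f w‖ ≤ 16/x^2/(c*x) := by
    intro lam hlam x hxX w hw
    have hx : (0:ℝ) < x := lt_of_lt_of_le one_pos (le_trans hX1 hxX)
    have hcx : (0:ℝ) < c*x := by positivity
    refine Complex.norm_deriv_le_of_forall_mem_sphere_norm_le hcx hf.diffContOnCl ?_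
    intro z hz
    refine hbound lam hlam x hxX z ?_
    have hz' : ‖z - w‖ = c*x := by
      rw [mem_sphere_iff_norm] at hz; exact hz
    have heq : z - ((x:ℂ) + lam * v x) = (z - w) + (w - ((x:ℂ) + lam * v x)) := by ring
    rw [heq]
    calc ‖(z - w) + (w - ((x:ℂ) + lam * v x))‖ ≤ ‖z - w‖ + ‖w - ((x:ℂ) + lam * v x)‖ :=
          norm_add_le _ _
      _ ≤ 2*c*x := by rw [hz']; linarith
  have hC2 : ∀ lam : ℂ, ‖lam‖ ≤ s → ∀ x : ℝ, X ≤ x →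
      ‖deriv (deriv f) ((x:ℂ) + lam * v x)‖ ≤ 16/x^2/(c*x)/(c*x) := by
    intro lam hlam x hxX
    have hx : (0:ℝ) < x := lt_of_lt_of_le one_pos (le_trans hX1 hxX)
    have hcx : (0:ℝ) < c*x := by positivity
    refine Complex.norm_deriv_le_of_forall_mem_sphere_norm_le hcx hf'.diffContOnCl ?_
    intro z hz
    refine hC1 lam hlam x hxX z ?_
    rw [mem_sphere_iff_norm] at hz
    exact le_of_eq hz
  -- compact part
  obtain ⟨Y, hY_def⟩ : ∃ Y : ℝ, Y = 2*X := ⟨_, rfl⟩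
  obtain ⟨M0, hM0⟩ := (isCompact_closedBall (0:ℂ) Y).exists_bound_of_continuousOn
    hf.continuous.continuousOn
  obtain ⟨M1, hM1⟩ := (isCompact_closedBall (0:ℂ) Y).exists_bound_of_continuousOn
    hf'.continuous.continuousOn
  obtain ⟨M2, hM2⟩ := (isCompact_closedBall (0:ℂ) Y).exists_bound_of_continuousOn
    hf''.continuous.continuousOn
  obtain ⟨N0, hN0_def⟩ : ∃ N : ℝ, N = max M0 0 := ⟨_, rfl⟩
  obtain ⟨N1, hN1_def⟩ : ∃ N : ℝ, N = max M1 0 := ⟨_, rfl⟩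
  obtain ⟨N2, hN2_def⟩ : ∃ N : ℝ, N = max M2 0 := ⟨_, rfl⟩
  have hN0 : 0 ≤ N0 := by rw [hN0_def]; exact le_max_right _ _
  have hN1 : 0 ≤ N1 := by rw [hN1_def]; exact le_max_right _ _
  have hN2 : 0 ≤ N2 := by rw [hN2_def]; exact le_max_right _ _
  have hM0' : ∀ z ∈ Metric.closedBall (0:ℂ) Y, ‖f z‖ ≤ N0 := fun z hz =>
    le_trans (hM0 z hz) (by rw [hN0_def]; exact le_max_left _ _)
  have hM1' : ∀ z ∈ Metric.closedBall (0:ℂ) Y, ‖deriv f z‖ ≤ N1 := fun z hz =>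
    le_trans (hM1 z hz) (by rw [hN1_def]; exact le_max_left _ _)
  have hM2' : ∀ z ∈ Metric.closedBall (0:ℂ) Y, ‖deriv (deriv f) z‖ ≤ N2 := fun z hz =>
    le_trans (hM2 z hz) (by rw [hN2_def]; exact le_max_left _ _)
  have humem : ∀ lam : ℂ, ‖lam‖ ≤ s → ∀ x : ℝ, 0 < x → x ≤ X →
      ((x:ℂ) + lam * v x) ∈ Metric.closedBall (0:ℂ) Y := by
    intro lam hlam x hx hxX
    rw [Metric.mem_closedBall, dist_zero_right]
    calc ‖(x:ℂ) + lam * v x‖ ≤ ‖(x:ℂ)‖ + ‖lam * (v x:ℂ)‖ := norm_add_le _ _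
      _ = |x| + ‖lam‖ * |v x| := by rw [norm_mul]; simp [Complex.norm_real]
      _ ≤ x + 1 * x := by
          rw [_root_.abs_of_nonneg hx.le, _root_.abs_of_nonneg (hv_nonneg x)]
          have h3 := hv_le x hx.le
          have hl1 : ‖lam‖ ≤ 1 := le_trans hlam hs1.le
          gcongr
          exact hv_nonneg x
      _ ≤ Y := by rw [hY_def]; linarith
  -- the dominating function
  obtain ⟨Cinf, hCinf_def⟩ : ∃ C : ℝ, C = 16 + 16/c + 16/(c*c) := ⟨_, rfl⟩
  have hCinf0 : 0 < Cinf := by rw [hCinf_def]; positivity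
  have hCinf16 : (16:ℝ) ≤ Cinf := by
    rw [hCinf_def]
    have h1 : (0:ℝ) ≤ 16/c := by positivity
    have h2 : (0:ℝ) ≤ 16/(c*c) := by positivity
    linarith
  have hCinfc : 16/c ≤ Cinf := by
    rw [hCinf_def]
    have h2 : (0:ℝ) ≤ 16/(c*c) := by positivity
    have h3 : (0:ℝ) < c := hc0
    nlinarith
  have hCinfcc : 16/(c*c) ≤ Cinf := by
    rw [hCinf_def]
    have h1 : (0:ℝ) ≤ 16/c := by positivity
    nlinarith
  obtain ⟨K0, hK0_def⟩ : ∃ K : ℝ, K = max (max N0 (max (X*N1) (X^2*N2))) Cinf := ⟨_, rfl⟩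
  have hK0 : 0 < K0 := by
    rw [hK0_def]; exact lt_of_lt_of_le hCinf0 (le_max_right _ _)
  have hCinfK : Cinf ≤ K0 := by rw [hK0_def]; exact le_max_right _ _
  have hN0K : N0 ≤ K0 := by
    rw [hK0_def]; exact le_trans (le_max_left _ _) (le_max_left _ _)
  have hN1K : X*N1 ≤ K0 := by
    rw [hK0_def]; exact le_trans (le_trans (le_max_left _ _) (le_max_right N0 _)) (le_max_left _ _)
  have hN2K : X^2*N2 ≤ K0 := by
    rw [hK0_def];
    exact le_trans (le_trans (le_max_right (X*N1) _) (le_max_right N0 _)) (le_max_left _ _)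
  obtain ⟨K1, hK1_def⟩ : ∃ K : ℝ, K = K0 * (1+X)^2 := ⟨_, rfl⟩
  have hK1 : 0 < K1 := by rw [hK1_def]; positivity
  refine ⟨fun x => K1 / (1 + x^2), ?_, ?_, ?_⟩
  · -- Memℒp
    have hgc : Continuous fun x : ℝ => K1 / (1 + x^2) :=
      continuous_const.div (by continuity) (fun x => by positivity)
    refine (memLp_two_iff_integrable_sq_norm hgc.aestronglyMeasurable).mpr ?_
    refine Integrable.mono' ((integrable_inv_one_add_sq.const_mul (K1^2)).restrict (s := Set.Ioi 0))
      ((hgc.norm.pow 2).aestronglyMeasurable) (ae_of_all _ fun x => ?_)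
    have h1 : (1:ℝ) ≤ 1 + x^2 := by nlinarith [sq_nonneg x]
    have h2 : (0:ℝ) < 1 + x^2 := by linarith
    have hgx0 : (0:ℝ) ≤ K1 / (1+x^2) := le_of_lt (div_pos hK1 h2)
    rw [Real.norm_eq_abs, _root_.abs_of_nonneg (by positivity : (0:ℝ) ≤ ‖K1/(1+x^2)‖^2),
      Real.norm_eq_abs, _root_.abs_of_nonneg hgx0, div_pow, div_le_iff₀ (by positivity)]
    calc K1^2 = K1^2 * 1 := by ring
      _ ≤ K1^2 * ((1+x^2)⁻¹ * (1+x^2)^2) := by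
          have h3 : (1:ℝ) ≤ (1+x^2)⁻¹ * (1+x^2)^2 := by
            rw [inv_mul_eq_div, le_div_iff₀ h2]; nlinarith
          have h4 : (0:ℝ) ≤ K1^2 := sq_nonneg _
          nlinarith
      _ = K1^2 * (1+x^2)⁻¹ * (1+x^2)^2 := by ring
  · intro x
    have h2 : (0:ℝ) < 1 + x^2 := by nlinarith [sq_nonneg x]
    exact le_of_lt (div_pos hK1 h2)
  · intro lam hlam x hx
    have h2 : (0:ℝ) < 1 + x^2 := by nlinarith [sq_nonneg x]
    rcases le_or_gt X x with hxX | hxX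
    · -- large x
      have hx1 : (1:ℝ) ≤ x := le_trans hX1 hxX
      have b0 : ‖f ((x:ℂ) + lam * v x)‖ ≤ 16/x^2 := by
        refine hbound lam hlam x hxX _ ?_
        simp only [sub_self, norm_zero]; positivity
      have b1 : ‖deriv f ((x:ℂ) + lam * v x)‖ ≤ 16/x^2/(c*x) := by
        refine hC1 lam hlam x hxX _ ?_
        simp only [sub_self, norm_zero]; positivity
      have b2 : ‖deriv (deriv f) ((x:ℂ) + lam * v x)‖ ≤ 16/x^2/(c*x)/(c*x) :=
        hC2 lam hlam x hxX
      have hgx : Cinf / x^2 ≤ K1 / (1 + x^2) := by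
        rw [div_le_div_iff₀ (by positivity) h2]
        have e2 : (4:ℝ) ≤ (1+X)^2 := by nlinarith [hX1]
        have e3 : (1:ℝ) ≤ x^2 := by nlinarith [hx1]
        have e4 : 4 * x^2 ≤ (1+X)^2 * x^2 := mul_le_mul_of_nonneg_right e2 (sq_nonneg x)
        have h1 : 1 + x^2 ≤ (1+X)^2 * x^2 := by linarith
        calc Cinf * (1 + x^2) ≤ Cinf * ((1+X)^2 * x^2) :=
              mul_le_mul_of_nonneg_left h1 hCinf0.le
          _ ≤ K0 * ((1+X)^2 * x^2) :=
              mul_le_mul_of_nonneg_right hCinfK (by positivity)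
          _ = K1 * x^2 := by rw [hK1_def]; ring
      refine ⟨?_, ?_, ?_⟩
      · refine le_trans b0 (le_trans ?_ hgx)
        gcongr
      · have hb1 : v x * ‖deriv f ((x:ℂ) + lam * v x)‖ ≤ x * (16/x^2/(c*x)) :=
          mul_le_mul (hv_le x hx.le) b1 (norm_nonneg _) hx.le
        refine le_trans hb1 (le_trans ?_ hgx)
        have heq : x * (16/x^2/(c*x)) = (16/c)/x^2 := by
          field_simp
        rw [heq]
        gcongr
      · have hvsq : (v x)^2 ≤ x^2 := by
          have h3 := hv_le x hx.le; have h4 := hv_nonneg x; nlinarith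
        have hb2 : (v x)^2 * ‖deriv (deriv f) ((x:ℂ) + lam * v x)‖
            ≤ x^2 * (16/x^2/(c*x)/(c*x)) :=
          mul_le_mul hvsq b2 (norm_nonneg _) (by positivity)
        refine le_trans hb2 (le_trans ?_ hgx)
        have heq : x^2 * (16/x^2/(c*x)/(c*x)) = (16/(c*c))/x^2 := by
          field_simp
        rw [heq]
        gcongr
    · -- small x
      have hu := humem lam hlam x hx hxX.le
      have hgx : K0 ≤ K1 / (1 + x^2) := by
        rw [le_div_iff₀ h2, hK1_def]
        have e1 : x^2 ≤ X^2 := by nlinarith [hx.le, hxX.le]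
        have e2 : 1 + x^2 ≤ (1+X)^2 := by nlinarith [hX0.le, e1]
        exact mul_le_mul_of_nonneg_left e2 hK0.le
      refine ⟨?_, ?_, ?_⟩
      · exact le_trans (hM0' _ hu) (le_trans hN0K hgx)
      · have hb1 : v x * ‖deriv f ((x:ℂ) + lam * v x)‖ ≤ X * N1 :=
          mul_le_mul (le_trans (hv_le x hx.le) hxX.le) (hM1' _ hu) (norm_nonneg _) hX0.le
        exact le_trans hb1 (le_trans hN1K hgx)
      · have hvsq : (v x)^2 ≤ X^2 := by
          have h3 := hv_le x hx.le; have h4 := hv_nonneg x; nlinarith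
        have hb2 : (v x)^2 * ‖deriv (deriv f) ((x:ℂ) + lam * v x)‖ ≤ X^2 * N2 :=
          mul_le_mul hvsq (hM2' _ hu) (norm_nonneg _) (by positivity)
        exact le_trans hb2 (le_trans hN2K hgx)

theorem partial_analytic_vectors_analytic
    {H : Type*} [NormedAddCommGroup H] [InnerProductSpace ℂ H] [CompleteSpace H]
    [SecondCountableTopology H]
    (R : ℝ) (hR : 0 < R) (v : ℝ → ℝ) (hv : ContDiff ℝ (⊤ : ℕ∞) v)
    (hv0 : ∀ x ≤ R, v x = 0) (hv' : ∀ x, 0 ≤ deriv v x ∧ deriv v x ≤ 1)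
    (f : ℂ → H) (hf : Differentiable ℂ f)
    (hdecay : ∀ ε ∈ Set.Ioo (0 : ℝ) 1, ∀ n : ℕ, ∀ δ > (0 : ℝ), ∃ T : ℝ, ∀ z : ℂ,
      |z.im| ≤ (1 - ε) * z.re → T ≤ z.re → z.re ^ n * ‖f z‖ < δ) :
    (∀ lam ∈ Metric.ball (0 : ℂ) (Real.sqrt 2)⁻¹,
      MeasureTheory.MemLp (fun x : ℝ => f ((x : ℂ) + lam * v x)) 2
        (volume.restrict (Set.Ioi (0 : ℝ)))) ∧
    ∃ F : ℂ → MeasureTheory.Lp H 2 (volume.restrict (Set.Ioi (0 : ℝ))),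
      DifferentiableOn ℂ F (Metric.ball (0 : ℂ) (Real.sqrt 2)⁻¹) ∧
      ∀ lam ∈ Metric.ball (0 : ℂ) (Real.sqrt 2)⁻¹,
        (F lam : ℝ → H) =ᵐ[volume.restrict (Set.Ioi (0 : ℝ))]
          fun x : ℝ => f ((x : ℂ) + lam * v x) := by
  classical
  have hvd : Differentiable ℝ v := hv.differentiable (by simp)
  have hvc : Continuous v := hv.continuous
  have hvmono : Monotone v := monotone_of_deriv_nonneg hvd fun x => (hv' x).1
  have hv_nonneg : ∀ x, 0 ≤ v x := by
    intro x
    rcases le_total x R with h | h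
    · exact (hv0 x h).ge
    · rw [← hv0 R le_rfl]; exact hvmono h
  have hv_le : ∀ x, 0 ≤ x → v x ≤ x := by
    intro x hx
    rcases le_total x R with h | h
    · rw [hv0 x h]; exact hx
    · have hwd : Differentiable ℝ (fun y : ℝ => y - v y) := differentiable_id.sub hvd
      have hw : Monotone (fun y : ℝ => y - v y) := by
        refine monotone_of_deriv_nonneg hwd fun y => ?_
        have hd : deriv (fun y : ℝ => y - v y) y = 1 - deriv v y := by
          rw [deriv_fun_sub (f := fun y : ℝ => y) (differentiableAt_id (x := y)) (hvd y), deriv_id'']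
        rw [hd]
        linarith [(hv' y).2]
      have h2 := hw h
      simp only [hv0 R le_rfl, sub_zero] at h2
      linarith
  -- derivatives of f
  have hfa : AnalyticOnNhd ℂ f Set.univ := hf.differentiableOn.analyticOnNhd isOpen_univ
  have hf' : Differentiable ℂ (deriv f) := fun z =>
    ((hfa.deriv) z (Set.mem_univ z)).differentiableAt
  -- continuity of the composed maps
  have hucont : ∀ lam : ℂ, Continuous fun x : ℝ => (x:ℂ) + lam * v x :=
    fun lam => Complex.continuous_ofReal.add
      (continuous_const.mul (Complex.continuous_ofReal.comp hvc))
  -- membership for each lam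
  have hmem : ∀ lam : ℂ, ‖lam‖ < (Real.sqrt 2)⁻¹ →
      MemLp (fun x : ℝ => f ((x:ℂ) + lam * v x)) 2 (volume.restrict (Set.Ioi (0:ℝ))) := by
    intro lam hlam
    obtain ⟨g, hg, hg0, hgb⟩ := key_bound v hvc hv_nonneg hv_le f hf hdecay ‖lam‖
      (norm_nonneg _) hlam
    refine MemLp.of_le hg (Continuous.aestronglyMeasurable
      (hf.continuous.comp (hucont lam))) ?_
    refine (ae_restrict_iff' measurableSet_Ioi).2 (ae_of_all _ fun x hx => ?_)
    exact le_trans ((hgb lam le_rfl x hx).1) (le_abs_self _)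
  refine ⟨fun lam hlam => hmem lam (by rwa [mem_ball_zero_iff] at hlam), ?_⟩
  refine ⟨fun lam => if h : ‖lam‖ < (Real.sqrt 2)⁻¹ then (hmem lam h).toLp _ else 0, ?_, ?_⟩
  swap
  · intro lam hlam
    rw [mem_ball_zero_iff] at hlam
    simp only [dif_pos hlam]
    exact MemLp.coeFn_toLp _
  -- differentiability
  intro l₀ hl₀'
  have hl₀ : ‖l₀‖ < (Real.sqrt 2)⁻¹ := by rwa [mem_ball_zero_iff] at hl₀'
  obtain ⟨s, hs_def⟩ : ∃ s : ℝ, s = (‖l₀‖ + (Real.sqrt 2)⁻¹)/2 := ⟨_, rfl⟩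
  have hs0 : 0 ≤ s := by
    rw [hs_def]
    have : (0:ℝ) < (Real.sqrt 2)⁻¹ := by positivity
    have := norm_nonneg l₀
    linarith
  have hss : s < (Real.sqrt 2)⁻¹ := by rw [hs_def]; linarith
  have hl₀s : ‖l₀‖ < s := by rw [hs_def]; linarith
  obtain ⟨g, hg, hg0, hgb⟩ := key_bound v hvc hv_nonneg hv_le f hf hdecay s hs0 hss
  -- membership of the candidate derivative
  have hmemD : ∀ lam : ℂ, ‖lam‖ ≤ s →
      MemLp (fun x : ℝ => ((v x : ℝ) : ℂ) • deriv f ((x:ℂ) + lam * v x)) 2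
        (volume.restrict (Set.Ioi (0:ℝ))) := by
    intro lam hlam
    refine MemLp.of_le hg (Continuous.aestronglyMeasurable
      ((Complex.continuous_ofReal.comp hvc).smul (hf'.continuous.comp (hucont lam)))) ?_
    refine (ae_restrict_iff' measurableSet_Ioi).2 (ae_of_all _ fun x hx => ?_)
    rw [norm_smul, Complex.norm_real, Real.norm_eq_abs, _root_.abs_of_nonneg (hv_nonneg x)]
    exact le_trans ((hgb lam hlam x hx).2.1) (le_abs_self _)
  -- Taylor estimate
  have htay : ∀ lam : ℂ, ‖lam‖ ≤ s → ∀ x : ℝ, 0 < x →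
      ‖f ((x:ℂ) + lam * v x) - f ((x:ℂ) + l₀ * v x)
        - (lam - l₀) • (((v x : ℝ) : ℂ) • deriv f ((x:ℂ) + l₀ * v x))‖
        ≤ ‖lam - l₀‖^2 * g x := by
    intro lam hlam x hx
    rcases eq_or_lt_of_le (hv_nonneg x) with hvx | hvx
    · rw [← hvx]
      simp only [Complex.ofReal_zero, mul_zero, add_zero, sub_self, zero_smul, smul_zero,
        sub_zero, norm_zero]
      exact mul_nonneg (by positivity) (hg0 x)
    · set e : ℂ := lam - l₀ with he_def
      set w : ℝ → ℂ := fun t => (x:ℂ) + (l₀ + (t:ℝ) * e) * v x with hw_def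
      have hwmem : ∀ t ∈ Set.Icc (0:ℝ) 1, ‖l₀ + (t:ℝ) * e‖ ≤ s := by
        intro t ht
        have heq : l₀ + (t:ℝ) * e = (((1-t:ℝ)):ℂ) * l₀ + ((t:ℝ):ℂ) * lam := by
          rw [he_def]; push_cast; ring
        rw [heq]
        calc ‖(((1-t:ℝ)):ℂ) * l₀ + ((t:ℝ):ℂ) * lam‖
            ≤ ‖(((1-t:ℝ)):ℂ) * l₀‖ + ‖((t:ℝ):ℂ) * lam‖ := norm_add_le _ _
          _ = (1-t)*‖l₀‖ + t*‖lam‖ := by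
              rw [norm_mul, norm_mul, Complex.norm_real, Complex.norm_real,
                Real.norm_eq_abs, Real.norm_eq_abs, _root_.abs_of_nonneg ht.1,
                _root_.abs_of_nonneg (by linarith [ht.2] : (0:ℝ) ≤ 1 - t)]
          _ ≤ (1-t)*s + t*s := by
              have h1 : (0:ℝ) ≤ 1 - t := by linarith [ht.2]
              have h2 : (0:ℝ) ≤ t := ht.1
              gcongr <;> first | exact hl₀s.le | exact hlam
          _ = s := by ring
      have hwder : ∀ t : ℝ, HasDerivAt w (e * (v x : ℂ)) t := by
        intro t
        have h1 : HasDerivAt (fun t : ℝ => ((t:ℝ):ℂ)) 1 t := by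
          exact Complex.ofRealCLM.hasDerivAt (x := t)
        have h2 : HasDerivAt (fun t : ℝ => (l₀ + ((t:ℝ):ℂ) * e) * ((v x : ℝ):ℂ))
            (e * (v x : ℂ)) t := by
          have h3 := ((h1.mul_const e).const_add l₀).mul_const ((v x : ℝ):ℂ)
          simpa using h3
        simpa [hw_def] using h2.const_add ((x:ℝ):ℂ)
      have hγd : ∀ t : ℝ, HasDerivAt (fun t => f (w t)) ((e * (v x:ℂ)) • deriv f (w t)) t := by
        intro t
        exact ((hf (w t)).hasDerivAt).scomp t (hwder t)
      have hηd : ∀ t : ℝ, HasDerivAt (fun t => deriv f (w t))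
          ((e * (v x:ℂ)) • deriv (deriv f) (w t)) t := by
        intro t
        exact ((hf' (w t)).hasDerivAt).scomp t (hwder t)
      -- inner MVT
      have hf''b : ∀ t ∈ Set.Icc (0:ℝ) 1, (v x)^2 * ‖deriv (deriv f) (w t)‖ ≤ g x := by
        intro t ht
        exact (hgb (l₀ + (t:ℝ) * e) (hwmem t ht) x hx).2.2
      have hinner : ∀ t ∈ Set.Icc (0:ℝ) 1,
          ‖deriv f (w t) - deriv f (w 0)‖ ≤ ‖e‖ * (g x / v x) := by
        intro t ht
        have hmvt := norm_image_sub_le_of_norm_deriv_le_segment'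
          (f := fun t => deriv f (w t))
          (f' := fun t => (e * (v x:ℂ)) • deriv (deriv f) (w t))
          (C := ‖e‖ * (g x / v x))
          (fun u hu => (hηd u).hasDerivWithinAt) ?_ t ht
        · refine le_trans hmvt ?_
          have hC0 : 0 ≤ ‖e‖ * (g x / v x) :=
            mul_nonneg (norm_nonneg _) (div_nonneg (hg0 x) hvx.le)
          nlinarith [ht.1, ht.2]
        · intro u hu
          have hu' : u ∈ Set.Icc (0:ℝ) 1 := Set.Ico_subset_Icc_self hu
          rw [norm_smul, norm_mul, Complex.norm_real, Real.norm_eq_abs,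
            _root_.abs_of_nonneg (hv_nonneg x)]
          have hb := hf''b u hu'
          rw [mul_assoc]
          refine mul_le_mul_of_nonneg_left ?_ (norm_nonneg e)
          rw [div_eq_mul_inv, ← mul_le_mul_iff_of_pos_right hvx]
          calc v x * ‖deriv (deriv f) (w u)‖ * v x
              = (v x)^2 * ‖deriv (deriv f) (w u)‖ := by ring
            _ ≤ g x := hb
            _ = g x * (v x)⁻¹ * v x := by
                field_simp
      -- outer MVT
      have hθ := norm_image_sub_le_of_norm_deriv_le_segment'
        (f := fun t : ℝ => f (w t) - t • (e • (((v x : ℝ):ℂ) • deriv f (w 0))))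
        (f' := fun t : ℝ => (e * (v x:ℂ)) • deriv f (w t)
          - e • (((v x : ℝ):ℂ) • deriv f (w 0)))
        (C := ‖e‖^2 * g x) ?_ ?_ 1 (Set.right_mem_Icc.2 zero_le_one)
      · have hw0 : w 0 = (x:ℂ) + l₀ * v x := by
          simp [hw_def]
        have hw1 : w 1 = (x:ℂ) + lam * v x := by
          simp only [hw_def, Complex.ofReal_one, one_mul, he_def]
          ring_nf
        rw [hw0] at hθ
        simp only [hw1, hw0, one_smul, zero_smul, sub_zero] at hθ
        calc ‖f ((x:ℂ) + lam * v x) - f ((x:ℂ) + l₀ * v x)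
              - (lam - l₀) • (((v x : ℝ):ℂ) • deriv f ((x:ℂ) + l₀ * v x))‖
            = ‖f ((x:ℂ) + lam * v x) - e • (((v x : ℝ):ℂ) • deriv f ((x:ℂ) + l₀ * v x))
              - f ((x:ℂ) + l₀ * v x)‖ := by
              rw [he_def]; congr 1; abel
          _ ≤ ‖e‖^2 * g x * 1 := hθ
          _ = ‖lam - l₀‖^2 * g x := by rw [he_def]; ring
      · intro u hu
        have hsc : HasDerivAt (fun t : ℝ => t • (e • (((v x : ℝ):ℂ) • deriv f (w 0))))
            (e • (((v x : ℝ):ℂ) • deriv f (w 0))) u := by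
          simpa using (hasDerivAt_id u).smul_const (e • (((v x : ℝ):ℂ) • deriv f (w 0)))
        exact ((hγd u).sub hsc).hasDerivWithinAt
      · intro u hu
        have hu' : u ∈ Set.Icc (0:ℝ) 1 := Set.Ico_subset_Icc_self hu
        have heq : (e * (v x:ℂ)) • deriv f (w u) - e • (((v x : ℝ):ℂ) • deriv f (w 0))
            = e • (((v x : ℝ):ℂ) • (deriv f (w u) - deriv f (w 0))) := by
          simp only [smul_sub, smul_smul]
        show ‖(e * ((v x : ℝ):ℂ)) • deriv f (w u) - e • (((v x : ℝ):ℂ) • deriv f (w 0))‖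
          ≤ ‖e‖^2 * g x
        rw [heq, norm_smul, norm_smul, Complex.norm_real, Real.norm_eq_abs,
          _root_.abs_of_nonneg (hv_nonneg x)]
        calc ‖e‖ * (v x * ‖deriv f (w u) - deriv f (w 0)‖)
            ≤ ‖e‖ * (v x * (‖e‖ * (g x / v x))) := by
              have := hinner u hu'
              gcongr
          _ = ‖e‖^2 * g x := by
              field_simp
  -- assemble the Lp estimate
  have hgfin : eLpNorm g 2 (volume.restrict (Set.Ioi (0:ℝ))) ≠ ⊤ := hg.2.ne
  obtain ⟨Cg, hCg_def⟩ : ∃ C : ℝ, C = (eLpNorm g 2 (volume.restrict (Set.Ioi (0:ℝ)))).toReal :=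
    ⟨_, rfl⟩
  set F : ℂ → Lp H 2 (volume.restrict (Set.Ioi (0:ℝ))) :=
    fun lam => if h : ‖lam‖ < (Real.sqrt 2)⁻¹ then (hmem lam h).toLp _ else 0 with hF_def
  have hD := hmemD l₀ hl₀s.le
  refine (HasDerivAt.differentiableAt (f' := hD.toLp _) ?_).differentiableWithinAt
  rw [hasDerivAt_iff_isLittleO]
  have hest : ∀ lam : ℂ, ‖lam‖ ≤ s →
      ‖F lam - F l₀ - (lam - l₀) • hD.toLp _‖ ≤ Cg * ‖lam - l₀‖^2 := by
    intro lam hlam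
    have hlam' : ‖lam‖ < (Real.sqrt 2)⁻¹ := lt_of_le_of_lt hlam hss
    obtain ⟨φ, hφ_def⟩ : ∃ φ : ℝ → H, φ = fun x : ℝ =>
        f ((x:ℂ) + lam * v x) - f ((x:ℂ) + l₀ * v x)
        - (lam - l₀) • (((v x : ℝ):ℂ) • deriv f ((x:ℂ) + l₀ * v x)) := ⟨_, rfl⟩
    have hφmem : MemLp φ 2 (volume.restrict (Set.Ioi (0:ℝ))) := by
      rw [hφ_def]
      exact ((hmem lam hlam').sub (hmem l₀ hl₀)).sub (hD.const_smul (lam - l₀))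
    have hae : (↑(F lam - F l₀ - (lam - l₀) • hD.toLp _) : ℝ → H)
        =ᵐ[volume.restrict (Set.Ioi (0:ℝ))] φ := by
      have e0 : F lam = (hmem lam hlam').toLp _ := by rw [hF_def]; exact dif_pos hlam'
      have e0' : F l₀ = (hmem l₀ hl₀).toLp _ := by rw [hF_def]; exact dif_pos hl₀
      have e1 := Lp.coeFn_sub (F lam - F l₀) ((lam - l₀) • hD.toLp _)
      have e2 := Lp.coeFn_sub (F lam) (F l₀)
      have e3 := Lp.coeFn_smul (lam - l₀) (hD.toLp _)
      have e4 := (hmem lam hlam').coeFn_toLp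
      have e5 := (hmem l₀ hl₀).coeFn_toLp
      have e6 := hD.coeFn_toLp
      rw [e0, e0']
      filter_upwards [e1, e2, e3, e4, e5, e6] with x h1 h2 h3 h4 h5 h6
      rw [hφ_def]
      simp only [e0, e0'] at h1 h2
      rw [h1, Pi.sub_apply, h2, Pi.sub_apply, h3, Pi.smul_apply, h4, h5, h6]
    calc ‖F lam - F l₀ - (lam - l₀) • hD.toLp _‖
        = (eLpNorm φ 2 (volume.restrict (Set.Ioi (0:ℝ)))).toReal := by
          rw [Lp.norm_def, eLpNorm_congr_ae hae]
      _ ≤ ((‖(‖lam - l₀‖^2 : ℝ)‖₊ : ENNReal)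
            * eLpNorm g 2 (volume.restrict (Set.Ioi (0:ℝ)))).toReal := by
          refine ENNReal.toReal_mono (ENNReal.mul_ne_top ENNReal.coe_ne_top hgfin) ?_
          have h7 : eLpNorm φ 2 (volume.restrict (Set.Ioi (0:ℝ)))
              ≤ eLpNorm ((‖lam - l₀‖^2 : ℝ) • g) 2 (volume.restrict (Set.Ioi (0:ℝ))) := by
            refine eLpNorm_mono_ae ?_
            refine (ae_restrict_iff' measurableSet_Ioi).2 (ae_of_all _ fun x hx => ?_)
            rw [hφ_def]
            refine le_trans (htay lam hlam x hx) ?_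
            rw [Pi.smul_apply, smul_eq_mul, Real.norm_eq_abs]
            exact le_abs_self _
          rw [eLpNorm_const_smul] at h7
          exact h7
      _ = ‖lam - l₀‖^2 * Cg := by
          rw [ENNReal.toReal_mul, hCg_def, ENNReal.coe_toReal, coe_nnnorm,
            Real.norm_eq_abs, _root_.abs_of_nonneg (by positivity)]
      _ = Cg * ‖lam - l₀‖^2 := by ring
  have hev : ∀ᶠ lam in nhds l₀, ‖F lam - F l₀ - (lam - l₀) • hD.toLp _‖
      ≤ Cg * ‖(lam - l₀) * (lam - l₀)‖ := by
    have hball : Metric.ball l₀ (s - ‖l₀‖) ∈ nhds l₀ :=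
      Metric.ball_mem_nhds _ (by linarith)
    filter_upwards [hball] with lam hlam
    have h5 : ‖lam‖ ≤ s := by
      have h6 : ‖lam - l₀‖ < s - ‖l₀‖ := by rwa [mem_ball_iff_norm] at hlam
      have h7 : ‖lam‖ ≤ ‖lam - l₀‖ + ‖l₀‖ := by
        calc ‖lam‖ = ‖(lam - l₀) + l₀‖ := by ring_nf
          _ ≤ ‖lam - l₀‖ + ‖l₀‖ := norm_add_le _ _
      linarith
    calc ‖F lam - F l₀ - (lam - l₀) • hD.toLp _‖ ≤ Cg * ‖lam - l₀‖^2 := hest lam h5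
      _ = Cg * ‖(lam - l₀) * (lam - l₀)‖ := by rw [norm_mul]; ring
  have hbigO : (fun lam => F lam - F l₀ - (lam - l₀) • hD.toLp _)
      =O[nhds l₀] (fun lam => (lam - l₀) * (lam - l₀)) :=
    Asymptotics.IsBigO.of_bound Cg hev
  have hlitt : (fun lam : ℂ => (lam - l₀) * (lam - l₀)) =o[nhds l₀] (fun lam => lam - l₀) := by
    have h6 : (fun lam : ℂ => lam - l₀) =o[nhds l₀] (fun _ => (1:ℂ)) := by
      rw [Asymptotics.isLittleO_one_iff]
      have ht0 : Filter.Tendsto (fun lam : ℂ => lam - l₀) (nhds l₀) (nhds (l₀ - l₀)) :=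
        (continuous_id.sub continuous_const).tendsto l₀
      rwa [sub_self] at ht0
    simpa using h6.mul_isBigO (Asymptotics.isBigO_refl (fun lam : ℂ => lam - l₀) (nhds l₀))
  exact hbigO.trans_isLittleO hlitt
end

section
/- Let χ : ℝ → ℝ be a smooth function with χ(x) = 1 for |x − 3| ≤ 1 and χ(x) = 0 for |x − 3| ≥ 2. Let λ ∈ ℂ with 1 + λ ≠ 0, let ν ∈ ℝ, and let μ ∈ ℂ with μ ≠ ν be such that (1 + λ)²·(μ − ν) is a nonnegative real number; let k ≥ 0 be the real number with k² = (1 + λ)²·(μ − ν). For ℓ ≥ 1 define u_ℓ : ℝ → ℂ by u_ℓ(x) = χ(x/ℓ)·exp(i·k·x). Then there is a constant C such that for all ℓ ≥ 1, ∫_ℝ |ν·u_ℓ(x) − (1 + λ)^{−2}·u_ℓ''(x) − μ·u_ℓ(x)|² dx ≤ C, while ∫_ℝ |u_ℓ(x)|² dx = ℓ·∫_ℝ χ(x)² dx → ∞ as ℓ → ∞. -/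
open Real Complex MeasureTheory Filter

lemma aux_hasDerivAt (f : ℝ → ℝ) (hf : Differentiable ℝ f) (l : ℝ) (k : ℝ) (x : ℝ) :
    HasDerivAt (fun x : ℝ => (f (x / l) : ℂ) * Complex.exp (Complex.I * k * x))
      ((↑(deriv f (x / l)) * (l : ℂ)⁻¹ + Complex.I * k * ↑(f (x / l))) *
        Complex.exp (Complex.I * k * x)) x := by
  have h1 : HasDerivAt (fun x : ℝ => f (x / l)) (deriv f (x / l) * (1 / l)) x :=
    (hf (x / l)).hasDerivAt.comp x ((hasDerivAt_id x).div_const l)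
  have h2 := h1.ofReal_comp
  have h3 : HasDerivAt (fun x : ℝ => Complex.exp (Complex.I * k * x))
      (Complex.exp (Complex.I * k * x) * (Complex.I * k)) x := by
    have h4 : HasDerivAt (fun x : ℝ => Complex.I * k * (x : ℂ)) (Complex.I * k) x := by
      simpa using ((hasDerivAt_id x).ofReal_comp.const_mul (Complex.I * k))
    exact h4.cexp
  have h5 := h2.fun_mul h3
  refine h5.congr_deriv ?_
  push_cast
  ring

theorem weyl_sequence (χ : ℝ → ℝ) (hχ : ContDiff ℝ (⊤ : ℕ∞) χ)
    (hχ1 : ∀ x : ℝ, |x - 3| ≤ 1 → χ x = 1) (hχ0 : ∀ x : ℝ, 2 ≤ |x - 3| → χ x = 0)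
    (lam : ℂ) (hlam : 1 + lam ≠ 0) (ν : ℝ) (μ : ℂ) (hμ : μ ≠ (ν : ℂ))
    (k : ℝ) (hk0 : 0 ≤ k) (hk : ((k : ℂ)) ^ 2 = (1 + lam) ^ 2 * (μ - ν))
    (u : ℝ → ℝ → ℂ)
    (hu : ∀ l x : ℝ, u l x = (χ (x / l) : ℂ) * Complex.exp (Complex.I * k * x)) :
    (∃ C : ℝ, ∀ l : ℝ, 1 ≤ l →
      (∫ x : ℝ, ‖(ν : ℂ) * u l x - ((1 + lam) ^ 2)⁻¹ * deriv (deriv (u l)) x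
          - μ * u l x‖ ^ 2) ≤ C) ∧
    (∀ l : ℝ, 1 ≤ l → (∫ x : ℝ, ‖u l x‖ ^ 2) = l * ∫ x : ℝ, χ x ^ 2) ∧
    Filter.Tendsto (fun l : ℝ => ∫ x : ℝ, ‖u l x‖ ^ 2)
      Filter.atTop Filter.atTop := by
  have hχtop : ContDiff ℝ (⊤ : ℕ∞) χ := hχ.of_le (by simp)
  have hχdiff : Differentiable ℝ χ := hχtop.differentiable (by simp)
  set χ₁ : ℝ → ℝ := deriv χ with hχ₁def
  set χ₂ : ℝ → ℝ := deriv χ₁ with hχ₂def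
  have hχ₁smooth : ContDiff ℝ (⊤ : ℕ∞) χ₁ := (contDiff_infty_iff_deriv.mp hχtop).2
  have hχ₁diff : Differentiable ℝ χ₁ := hχ₁smooth.differentiable (by simp)
  have hχ₁cont : Continuous χ₁ := hχ₁diff.continuous
  have hχ₂cont : Continuous χ₂ := ((contDiff_infty_iff_deriv.mp hχ₁smooth).2).continuous
  have hχcont : Continuous χ := hχdiff.continuous
  -- vanishing of derivatives outside the support
  have hU : IsOpen {x : ℝ | 2 < |x - 3|} :=
    isOpen_lt continuous_const ((continuous_id.sub continuous_const).abs)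
  have h1z : ∀ x : ℝ, 2 < |x - 3| → χ₁ x = 0 := by
    intro x hx
    have hev : χ =ᶠ[nhds x] fun _ => 0 :=
      Filter.eventuallyEq_of_mem (hU.mem_nhds hx) (fun y hy => hχ0 y (le_of_lt hy))
    rw [hχ₁def, hev.deriv_eq]
    simp
  have h2z : ∀ x : ℝ, 2 < |x - 3| → χ₂ x = 0 := by
    intro x hx
    have hev : χ₁ =ᶠ[nhds x] fun _ => 0 :=
      Filter.eventuallyEq_of_mem (hU.mem_nhds hx) (fun y hy => h1z y hy)
    rw [hχ₂def, hev.deriv_eq]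
    simp
  have houtside : ∀ x : ℝ, x ∉ Set.Icc (1 : ℝ) 5 → 2 < |x - 3| := by
    intro x hx
    by_contra hcon
    push_neg at hcon
    rcases abs_le.mp hcon with ⟨ha, hb⟩
    exact hx ⟨by linarith, by linarith⟩
  have hcs1 : HasCompactSupport χ₁ :=
    HasCompactSupport.intro isCompact_Icc (fun x hx => h1z x (houtside x hx))
  have hcs2 : HasCompactSupport χ₂ :=
    HasCompactSupport.intro isCompact_Icc (fun x hx => h2z x (houtside x hx))
  have hcs0 : HasCompactSupport χ :=
    HasCompactSupport.intro isCompact_Icc (fun x hx => hχ0 x (le_of_lt (houtside x hx)))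
  obtain ⟨M₁, hM₁⟩ := hcs1.exists_bound_of_continuous hχ₁cont
  obtain ⟨M₂, hM₂⟩ := hcs2.exists_bound_of_continuous hχ₂cont
  have hM₁0 : 0 ≤ M₁ := (norm_nonneg _).trans (hM₁ 0)
  have hM₂0 : 0 ≤ M₂ := (norm_nonneg _).trans (hM₂ 0)
  simp only [Real.norm_eq_abs] at hM₁ hM₂
  set c0 : ℝ := ‖((1 + lam) ^ 2)⁻¹‖ with hc0def
  have hc00 : 0 ≤ c0 := norm_nonneg _
  set D : ℝ := c0 * (M₂ + 2 * k * M₁) with hDdef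
  have hD0 : 0 ≤ D := by positivity
  have hc : ((1 + lam) ^ 2) ≠ 0 := pow_ne_zero 2 hlam
  have hkey : ((1 + lam) ^ 2)⁻¹ * (k : ℂ) ^ 2 = μ - ν := by
    rw [hk, inv_mul_cancel_left₀ hc]
  -- second derivative formula
  have habs_exp : ∀ x : ℝ, ‖Complex.exp (Complex.I * k * x)‖ = 1 := by
    intro x
    rw [Complex.norm_exp]
    have : (Complex.I * k * x).re = 0 := by simp
    rw [this, Real.exp_zero]
  have hD2 : ∀ l : ℝ, l ≠ 0 → ∀ x : ℝ, deriv (deriv (u l)) x =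
      (↑(χ₂ (x / l)) * ((l : ℂ)⁻¹) ^ 2 + 2 * Complex.I * k * ↑(χ₁ (x / l)) * (l : ℂ)⁻¹
        - (k : ℂ) ^ 2 * ↑(χ (x / l))) * Complex.exp (Complex.I * k * x) := by
    intro l hl x
    have hul : u l = fun x => (χ (x / l) : ℂ) * Complex.exp (Complex.I * k * x) :=
      funext (hu l)
    have hd1 : deriv (u l) = fun x =>
        (l : ℂ)⁻¹ * ((χ₁ (x / l) : ℂ) * Complex.exp (Complex.I * k * x)) +
        (Complex.I * k) * ((χ (x / l) : ℂ) * Complex.exp (Complex.I * k * x)) := by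
      funext y
      rw [hul, (aux_hasDerivAt χ hχdiff l k y).deriv]
      ring
    rw [hd1]
    have hA := (aux_hasDerivAt χ₁ hχ₁diff l k x).const_mul ((l : ℂ)⁻¹)
    have hB := (aux_hasDerivAt χ hχdiff l k x).const_mul (Complex.I * (k : ℂ))
    rw [(hA.fun_add hB).deriv]
    have hI2 : Complex.I * Complex.I = -1 := Complex.I_mul_I
    simp only [← hχ₁def, ← hχ₂def]
    linear_combination ((k:ℂ)^2 * ↑(χ (x / l)) * Complex.exp (Complex.I * ↑k * ↑x)) * hI2
  -- Part 2
  have habs_u : ∀ l : ℝ, (fun x : ℝ => ‖u l x‖ ^ 2) = fun x : ℝ => χ (x / l) ^ 2 := by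
    intro l
    funext x
    rw [hu, norm_mul, habs_exp, mul_one, Complex.norm_real, Real.norm_eq_abs, _root_.sq_abs]
  have hpart2 : ∀ l : ℝ, 1 ≤ l →
      (∫ x : ℝ, ‖u l x‖ ^ 2) = l * ∫ x : ℝ, χ x ^ 2 := by
    intro l hl
    have hl0 : (0:ℝ) < l := lt_of_lt_of_le one_pos hl
    rw [habs_u l, MeasureTheory.Measure.integral_comp_div (fun y => χ y ^ 2) l,
      abs_of_pos hl0, smul_eq_mul]
  -- Positivity of ∫ χ²
  have hχsqcs : HasCompactSupport (fun x : ℝ => χ x ^ 2) :=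
    HasCompactSupport.intro isCompact_Icc (fun x hx => by
      rw [hχ0 x (le_of_lt (houtside x hx))]; ring)
  have hχsqint : Integrable (fun x : ℝ => χ x ^ 2) :=
    (hχcont.pow 2).integrable_of_hasCompactSupport hχsqcs
  have hindint : Integrable (Set.indicator (Set.Icc (2:ℝ) 4) fun _ => (1:ℝ)) :=
    (integrable_indicator_iff measurableSet_Icc).mpr
      ((integrableOn_const_iff).mpr (Or.inr measure_Icc_lt_top))
  have hle1 : Set.indicator (Set.Icc (2:ℝ) 4) (fun _ => (1:ℝ)) ≤ fun x => χ x ^ 2 := by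
    intro x
    by_cases hx : x ∈ Set.Icc (2:ℝ) 4
    · rw [Set.indicator_of_mem hx]
      show (1:ℝ) ≤ χ x ^ 2
      obtain ⟨ha, hb⟩ := hx
      rw [hχ1 x (abs_le.mpr ⟨by linarith, by linarith⟩)]
      norm_num
    · rw [Set.indicator_of_notMem hx]
      positivity
  have hpos : (0:ℝ) < ∫ x : ℝ, χ x ^ 2 := by
    have h2 := integral_mono hindint hχsqint hle1
    rw [integral_indicator_const _ measurableSet_Icc, measureReal_def, Real.volume_Icc,
      ENNReal.toReal_ofReal (by norm_num), smul_eq_mul, mul_one] at h2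
    linarith
  have hpart3 : Filter.Tendsto (fun l : ℝ => ∫ x : ℝ, ‖u l x‖ ^ 2)
      Filter.atTop Filter.atTop := by
    refine Filter.Tendsto.congr' ?_ (tendsto_id.atTop_mul_const hpos)
    filter_upwards [eventually_ge_atTop (1:ℝ)] with l hl
    exact (hpart2 l hl).symm
  refine ⟨⟨4 * D ^ 2, ?_⟩, hpart2, hpart3⟩
  intro l hl
  have hl0 : (0:ℝ) < l := lt_of_lt_of_le one_pos hl
  have hlne : l ≠ 0 := hl0.ne'
  have hinv0 : (0:ℝ) ≤ l⁻¹ := by positivity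
  have hinv1 : l⁻¹ ≤ 1 := inv_le_one_of_one_le₀ hl
  set G : ℝ → ℂ := fun x => (-(((1 + lam) ^ 2)⁻¹)) *
      ((χ₂ (x / l) : ℂ) * ((l : ℂ)⁻¹) ^ 2 +
        2 * Complex.I * k * (χ₁ (x / l) : ℂ) * (l : ℂ)⁻¹) *
      Complex.exp (Complex.I * k * x) with hGdef
  have hfun : (fun x : ℝ => ‖(ν : ℂ) * u l x
        - ((1 + lam) ^ 2)⁻¹ * deriv (deriv (u l)) x - μ * u l x‖ ^ 2)
      = fun x : ℝ => ‖G x‖ ^ 2 := by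
    funext x
    have hEG : (ν : ℂ) * u l x - ((1 + lam) ^ 2)⁻¹ * deriv (deriv (u l)) x - μ * u l x
        = G x := by
      rw [hu, hD2 l hlne x, hGdef]
      linear_combination ((χ (x / l) : ℂ) * Complex.exp (Complex.I * ↑k * ↑x)) * hkey
    rw [hEG]
  have hGcont : Continuous G := by
    rw [hGdef]
    apply Continuous.mul
    · apply Continuous.mul continuous_const
      exact ((Complex.continuous_ofReal.comp (hχ₂cont.comp (continuous_id.div_const l))).mul
          continuous_const).add
        ((continuous_const.mul
          (Complex.continuous_ofReal.comp (hχ₁cont.comp (continuous_id.div_const l)))).mul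
          continuous_const)
    · exact Complex.continuous_exp.comp (continuous_const.mul Complex.continuous_ofReal)
  have hGsupp : ∀ x : ℝ, x ∉ Set.Icc l (5 * l) → G x = 0 := by
    intro x hx
    have hxl : 2 < |x / l - 3| := by
      rw [Set.mem_Icc] at hx
      push_neg at hx
      rcases lt_or_ge x l with h | h
      · have h1 : x / l < 1 := (div_lt_one hl0).mpr h
        rw [lt_abs]; right; linarith
      · have h5 : 5 * l < x := hx h
        have h6 : 5 < x / l := (lt_div_iff₀ hl0).mpr (by linarith)
        rw [lt_abs]; left; linarith
    simp [hGdef, h1z _ hxl, h2z _ hxl]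
  have hint : Integrable (fun x : ℝ => ‖G x‖ ^ 2) := by
    apply Continuous.integrable_of_hasCompactSupport
    · exact (continuous_norm.comp hGcont).pow 2
    · exact HasCompactSupport.intro isCompact_Icc
        (fun x hx => by rw [hGsupp x hx]; simp)
  have habsG : ∀ x : ℝ, ‖G x‖ ≤ D * l⁻¹ := by
    intro x
    rw [hGdef]
    simp only []
    rw [norm_mul, norm_mul, habs_exp, mul_one, norm_neg]
    have hB : ‖(χ₂ (x / l) : ℂ) * ((l : ℂ)⁻¹) ^ 2 +
        2 * Complex.I * k * (χ₁ (x / l) : ℂ) * (l : ℂ)⁻¹‖ ≤ (M₂ + 2 * k * M₁) * l⁻¹ := by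
      refine (norm_add_le _ _).trans ?_
      have e1 : ‖(χ₂ (x / l) : ℂ) * ((l : ℂ)⁻¹) ^ 2‖
          = |χ₂ (x / l)| * (l⁻¹) ^ 2 := by
        rw [norm_mul, norm_pow, norm_inv, Complex.norm_real, Complex.norm_real, Real.norm_eq_abs, Real.norm_eq_abs,
          abs_of_pos hl0]
      have e2 : ‖2 * Complex.I * k * (χ₁ (x / l) : ℂ) * (l : ℂ)⁻¹‖
          = 2 * k * |χ₁ (x / l)| * l⁻¹ := by
        simp only [norm_mul, norm_inv, Complex.norm_real, Real.norm_eq_abs, Complex.norm_I,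
          Complex.norm_two, _root_.abs_of_nonneg hk0, _root_.abs_of_pos hl0]
        ring
      rw [e1, e2]
      have b1 := hM₂ (x / l)
      have b2 := hM₁ (x / l)
      have t1 : |χ₂ (x / l)| * (l⁻¹) ^ 2 ≤ M₂ * l⁻¹ := by
        have s1 : |χ₂ (x / l)| * (l⁻¹) ^ 2 ≤ M₂ * (l⁻¹) ^ 2 :=
          mul_le_mul_of_nonneg_right b1 (by positivity)
        refine s1.trans ?_
        have s2 : (l⁻¹ : ℝ) ^ 2 ≤ l⁻¹ := by nlinarith
        exact mul_le_mul_of_nonneg_left s2 hM₂0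
      have t2 : 2 * k * |χ₁ (x / l)| * l⁻¹ ≤ 2 * k * M₁ * l⁻¹ :=
        mul_le_mul_of_nonneg_right
          (mul_le_mul_of_nonneg_left b2 (by positivity)) hinv0
      nlinarith
    refine le_trans (mul_le_mul_of_nonneg_left hB hc00) (le_of_eq ?_)
    rw [hDdef]; ring
  have hgind : Integrable (Set.indicator (Set.Icc l (5 * l)) fun _ => (D * l⁻¹) ^ 2) :=
    (integrable_indicator_iff measurableSet_Icc).mpr
      ((integrableOn_const_iff).mpr (Or.inr measure_Icc_lt_top))
  have hle2 : (fun x : ℝ => ‖G x‖ ^ 2) ≤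
      Set.indicator (Set.Icc l (5 * l)) fun _ => (D * l⁻¹) ^ 2 := by
    intro x
    show ‖G x‖ ^ 2 ≤ Set.indicator (Set.Icc l (5 * l)) (fun _ => (D * l⁻¹) ^ 2) x
    by_cases hx : x ∈ Set.Icc l (5 * l)
    · rw [Set.indicator_of_mem hx]
      exact pow_le_pow_left₀ (norm_nonneg _) (habsG x) 2
    · rw [Set.indicator_of_notMem hx, hGsupp x hx]
      simp
  rw [hfun]
  calc (∫ x : ℝ, ‖G x‖ ^ 2)
      ≤ ∫ x : ℝ, Set.indicator (Set.Icc l (5 * l)) (fun _ => (D * l⁻¹) ^ 2) x :=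
        integral_mono hint hgind hle2
    _ = (volume (Set.Icc l (5 * l))).toReal * (D * l⁻¹) ^ 2 := by
        rw [integral_indicator_const _ measurableSet_Icc, smul_eq_mul, measureReal_def]
    _ = 4 * l * (D * l⁻¹) ^ 2 := by
        rw [Real.volume_Icc, ENNReal.toReal_ofReal (by linarith)]; ring
    _ = 4 * D ^ 2 * l⁻¹ := by field_simp
    _ ≤ 4 * D ^ 2 := mul_le_of_le_one_right (by positivity) hinv1
end

section
/- Let S ⊆ ℝ be a nonempty closed set that is bounded below, let λ ∈ ℂ with |arg(1 + λ)| < π/4, and let μ ∈ ℂ. Assume that for no τ ∈ ℝ and no s ∈ S one has μ = s + (1 + λ)^{−2}·τ². Then inf{ |μ − (1 + λ)^{−2}·τ² − s| : τ ∈ ℝ, s ∈ S } > 0. -/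
open Real Complex

/-!
Put `c = (1 + λ)⁻²`. The condition `|arg (1 + λ)| < π / 4` gives `Re c > 0` (or `c = 0` when
`1 + λ = 0`, by the convention `0⁻¹ = 0`). Since `Re (c τ² + s) = Re c · τ² + s` and `S` is
bounded below, `c τ² + s` can stay in a bounded set only if `τ` and `s` do. Hence the union of
the parabolas `{s + c τ² : τ ∈ ℝ}`, `s ∈ S`, is closed, and `μ` lies at positive distance from it.
-/

open Metric Set

theorem IsClosed.image_of_isBounded_inter_preimage {X Y : Type*} [PseudoMetricSpace X]
    [ProperSpace X] [MetricSpace Y] {f : X → Y} {A : Set X} (hA : IsClosed A)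
    (hf : Continuous f) (hbdd : ∀ B : Set Y, Bornology.IsBounded B →
      Bornology.IsBounded (A ∩ f ⁻¹' B)) :
    IsClosed (f '' A) := by
  refine isClosed_of_closure_subset fun z hz => ?_
  set C := A ∩ f ⁻¹' closedBall z 1
  have hC : IsCompact C := isCompact_of_isClosed_isBounded
    (hA.inter (isClosed_closedBall.preimage hf)) (hbdd _ isBounded_closedBall)
  have hzC : z ∈ closure (f '' C) := by
    refine closure_mono ?_ (isOpen_ball.inter_closure ⟨mem_ball_self one_pos, hz⟩)
    rintro _ ⟨hy, x, hx, rfl⟩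
    exact ⟨x, ⟨hx, ball_subset_closedBall hy⟩, rfl⟩
  obtain ⟨x, hx, rfl⟩ := (hC.image hf).isClosed.closure_subset hzC
  exact ⟨x, hx.1, rfl⟩

theorem Complex.re_sq_pos_of_abs_arg_lt {z : ℂ} (hz : z ≠ 0) (h : |arg z| < π / 4) :
    0 < (z ^ 2).re := by
  have hcos : 0 < Real.cos (2 * arg z) := by
    obtain ⟨h₁, h₂⟩ := abs_lt.mp h
    exact Real.cos_pos_of_mem_Ioo ⟨by linarith, by linarith⟩
  have hpolar : z ^ 2 = ((‖z‖ ^ 2 : ℝ) : ℂ) * exp ((2 * arg z : ℝ) * I) := by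
    conv_lhs => rw [← norm_mul_exp_arg_mul_I z]
    rw [mul_pow, ← exp_nat_mul]
    push_cast
    ring_nf
  rw [hpolar, re_ofReal_mul, exp_ofReal_mul_I_re]
  have := norm_pos_iff.mpr hz
  positivity

theorem Complex.re_inv_sq_pos_of_abs_arg_lt {z : ℂ} (hz : z ≠ 0) (h : |arg z| < π / 4) :
    0 < ((z ^ 2)⁻¹).re := by
  rw [inv_re]
  exact div_pos (re_sq_pos_of_abs_arg_lt hz h) (normSq_pos.mpr (pow_ne_zero 2 hz))

def sweptParabolas (c : ℂ) (S : Set ℝ) : Set ℂ :=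
  (fun p : ℝ × ℝ => c * (p.1 : ℂ) ^ 2 + p.2) '' (univ ×ˢ S)

theorem sweptParabolas_zero (S : Set ℝ) : sweptParabolas 0 S = ofReal '' S := by
  ext z
  simp [sweptParabolas]

theorem isClosed_sweptParabolas_of_re_pos {c : ℂ} (hc : 0 < c.re) {S : Set ℝ}
    (hS : IsClosed S) (hSbd : BddBelow S) : IsClosed (sweptParabolas c S) := by
  obtain ⟨m, hm⟩ := hSbd
  refine (isClosed_univ.prod hS).image_of_isBounded_inter_preimage (by fun_prop) ?_
  intro B hB
  obtain ⟨R, hR⟩ := hB.subset_closedBall 0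
  refine ((isBounded_Icc (-√((R - m) / c.re)) √((R - m) / c.re)).prod
    (isBounded_Icc m R)).subset ?_
  rintro ⟨τ, s⟩ ⟨⟨-, hs⟩, hτs⟩
  have hre : c.re * τ ^ 2 + s ≤ R := by
    have := (re_le_norm _).trans (mem_closedBall_zero_iff.mp (hR hτs))
    simpa [← ofReal_pow, mul_comm] using this
  have hms : m ≤ s := hm hs
  have hcτ : 0 ≤ c.re * τ ^ 2 := by positivity
  refine ⟨abs_le.mp (Real.abs_le_sqrt ?_), hms, by linarith⟩
  rw [le_div_iff₀ hc]
  linarith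

theorem isClosed_sweptParabolas {c : ℂ} (hc : c = 0 ∨ 0 < c.re) {S : Set ℝ}
    (hS : IsClosed S) (hSbd : BddBelow S) : IsClosed (sweptParabolas c S) := by
  rcases hc with rfl | hc
  · rw [sweptParabolas_zero]
    exact isometry_ofReal.isClosedEmbedding.isClosedMap _ hS
  · exact isClosed_sweptParabolas_of_re_pos hc hS hSbd

theorem distance_to_spectral_curve (S : Set ℝ) (hS : S.Nonempty) (hScl : IsClosed S)
    (hSbd : BddBelow S)
    (lam : ℂ) (hlam : |Complex.arg (1 + lam)| < Real.pi / 4)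
    (μ : ℂ) (hμ : ¬∃ τ : ℝ, ∃ s ∈ S, μ = (s : ℂ) + ((1 + lam) ^ 2)⁻¹ * (τ : ℂ) ^ 2) :
    0 < sInf {r : ℝ | ∃ τ : ℝ, ∃ s ∈ S,
      r = ‖μ - ((1 + lam) ^ 2)⁻¹ * (τ : ℂ) ^ 2 - (s : ℂ)‖} := by
  set c : ℂ := ((1 + lam) ^ 2)⁻¹
  set K := sweptParabolas c S
  have hc : c = 0 ∨ 0 < c.re := by
    rcases eq_or_ne (1 + lam) 0 with h | h
    · simp [c, h]
    · exact .inr (re_inv_sq_pos_of_abs_arg_lt h hlam)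
  obtain ⟨s₀, hs₀⟩ := hS
  have hKne : K.Nonempty := ⟨_, (0, s₀), ⟨trivial, hs₀⟩, rfl⟩
  have hμK : μ ∉ K := by
    rintro ⟨⟨τ, s⟩, ⟨-, hs⟩, hμ'⟩
    exact hμ ⟨τ, s, hs, by rw [← hμ', add_comm]⟩
  refine ((isClosed_sweptParabolas hc hScl hSbd).notMem_iff_infDist_pos hKne |>.mp hμK).trans_le
    (le_csInf ⟨_, 0, s₀, hs₀, rfl⟩ ?_)
  rintro r ⟨τ, s, hs, rfl⟩
  calc infDist μ K ≤ dist μ (c * (τ : ℂ) ^ 2 + s) :=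
        infDist_le_dist_of_mem ⟨(τ, s), ⟨trivial, hs⟩, rfl⟩
    _ = ‖μ - c * (τ : ℂ) ^ 2 - s‖ := by rw [dist_eq_norm, sub_add_eq_sub_sub]
end

section
/- Let n ∈ ℕ, α ∈ (0, π/4), λ ∈ ℂ with |λ| ≤ sin α, and t ∈ [0, 1]. Let D be the (n+1)×(n+1) complex diagonal matrix D = diag{(1 + λt)^{−2}, 1, …, 1}, and let M be an (n+1)×(n+1) complex matrix such that max_{i,j} |M_{ij} − D_{ij}| ≤ c, where c ≥ 0 satisfies (n+1)²·c < cos(2α)/4. Then for every ξ ∈ ℝ^{n+1}, Re( Σ_{i,j} ξ_i·M_{ij}·ξ_j ) ≥ ( cos(2α)/4 − (n+1)²·c )·‖ξ‖², where ‖ξ‖² = ξ₁² + ⋯ + ξ_{n+1}². -/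
open Real Complex Finset

/-! For `w = 1 + λt` we have `‖w - 1‖ ≤ sin α`, so `w` lies in the sector `|arg w| ≤ α` and has
modulus at most `2`; hence `w⁻²` lies in the sector `|arg| ≤ 2α` and has modulus at least `1/4`,
so `Re w⁻² ≥ cos 2α / 4`. The quadratic form of the diagonal matrix `D` therefore has real part at
least `cos 2α / 4 · ‖ξ‖²`, and by Cauchy–Schwarz the perturbation `M - D` moves the form by at
most `(n + 1) c ‖ξ‖²`. -/

namespace Complex

/-- The closed disc of radius `sin α` about `1` lies in the sector `|arg w| ≤ α`. -/
lemma cos_mul_abs_im_le_sin_mul_re {w : ℂ} {α : ℝ} (hsin : 0 ≤ Real.sin α)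
    (hw : ‖w - 1‖ ≤ Real.sin α) : Real.cos α * |w.im| ≤ Real.sin α * w.re := by
  have hdisc : (w.re - 1) ^ 2 + w.im ^ 2 ≤ Real.sin α ^ 2 := by
    have := pow_le_pow_left₀ (norm_nonneg _) hw 2
    rwa [Complex.sq_norm, normSq_apply, sub_re, sub_im, one_re, one_im, sub_zero, ← sq, ← sq]
      at this
  -- Cauchy–Schwarz: `(cos α |y| - sin α x)² ≤ (cos² α + sin² α)(x² + y²)`.
  have hcs : (Real.cos α * |w.im| - Real.sin α * (w.re - 1)) ^ 2 ≤ Real.sin α ^ 2 := by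
    nlinarith [sq_nonneg (Real.cos α * (w.re - 1) + Real.sin α * |w.im|),
      Real.cos_sq_add_sin_sq α, sq_abs w.im]
  linarith [(abs_le_of_sq_le_sq' hcs hsin).2]

lemma cos_two_mul_mul_sq_norm_le_re_sq {w : ℂ} {α : ℝ} (hα : α ∈ Set.Icc 0 (π / 2))
    (hw : ‖w - 1‖ ≤ Real.sin α) : Real.cos (2 * α) * ‖w‖ ^ 2 ≤ (w ^ 2).re := by
  have hsin : 0 ≤ Real.sin α := sin_nonneg_of_nonneg_of_le_pi hα.1 (by linarith [hα.2, pi_pos])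
  have hcos : 0 ≤ Real.cos α := cos_nonneg_of_mem_Icc ⟨by linarith [hα.1, pi_pos], hα.2⟩
  have hsector := cos_mul_abs_im_le_sin_mul_re hsin hw
  have hsq : (Real.cos α * |w.im|) ^ 2 ≤ (Real.sin α * w.re) ^ 2 :=
    pow_le_pow_left₀ (by positivity) hsector 2
  rw [mul_pow, mul_pow, sq_abs] at hsq
  rw [Complex.sq_norm, normSq_apply, pow_two w, mul_re, Real.cos_two_mul]
  linear_combination 2 * hsq + 2 * w.re ^ 2 * Real.cos_sq_add_sin_sq α

lemma cos_two_mul_div_four_le_re_inv_sq {w : ℂ} {α : ℝ} (hα : α ∈ Set.Icc 0 (π / 4))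
    (hw : ‖w - 1‖ ≤ Real.sin α) : Real.cos (2 * α) / 4 ≤ ((w ^ 2)⁻¹).re := by
  have hcos2 : 0 ≤ Real.cos (2 * α) :=
    Real.cos_nonneg_of_mem_Icc (x := 2 * α) ⟨by linarith [hα.1, pi_pos], by linarith [hα.2]⟩
  have hsin1 : Real.sin α < 1 := by
    have := Real.cos_pos_of_mem_Ioo (x := α)
      ⟨by linarith [hα.1, pi_pos], by linarith [hα.2, pi_pos]⟩
    nlinarith [Real.sin_sq_add_cos_sq α, Real.sin_le_one α]
  have hnorm : 1 - Real.sin α ≤ ‖w‖ ∧ ‖w‖ ≤ 1 + Real.sin α := by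
    constructor
    · linarith [norm_sub_norm_le 1 w, norm_sub_rev w 1, norm_one (α := ℂ)]
    · linarith [norm_le_norm_add_norm_sub' w 1, norm_one (α := ℂ)]
  have hpos : 0 < ‖w‖ := by linarith
  have hle4 : ‖w‖ ^ 2 ≤ 4 := by nlinarith [Real.sin_le_one α]
  calc Real.cos (2 * α) / 4 ≤ Real.cos (2 * α) / ‖w‖ ^ 2 :=
        div_le_div_of_nonneg_left hcos2 (by positivity) hle4
    _ = Real.cos (2 * α) * ‖w‖ ^ 2 / ‖w‖ ^ 4 := by field_simp
    _ ≤ (w ^ 2).re / ‖w‖ ^ 4 := div_le_div_of_nonneg_right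
        (cos_two_mul_mul_sq_norm_le_re_sq ⟨hα.1, by linarith [hα.2, pi_pos]⟩ hw) (by positivity)
    _ = ((w ^ 2)⁻¹).re := by rw [inv_re, normSq_eq_norm_sq, norm_pow]; ring

end Complex

namespace Matrix

variable {ι : Type*} [Fintype ι]

def realQuadForm (M : Matrix ι ι ℂ) (ξ : ι → ℝ) : ℂ :=
  ∑ i, ∑ j, (ξ i : ℂ) * M i j * ξ j

lemma realQuadForm_sub (M N : Matrix ι ι ℂ) (ξ : ι → ℝ) :
    (M - N).realQuadForm ξ = M.realQuadForm ξ - N.realQuadForm ξ := by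
  simp only [realQuadForm, sub_apply, mul_sub, sub_mul, sum_sub_distrib]

lemma mul_sum_sq_le_re_realQuadForm_diagonal [DecidableEq ι] {d : ι → ℂ} {m : ℝ}
    (hd : ∀ i, m ≤ (d i).re) (ξ : ι → ℝ) :
    m * ∑ i, ξ i ^ 2 ≤ (realQuadForm (diagonal d) ξ).re := by
  simp only [realQuadForm, diagonal_apply, mul_ite, ite_mul, mul_zero, zero_mul, sum_ite_eq,
    mem_univ, if_true, re_sum, mul_sum]
  refine sum_le_sum fun i _ => ?_
  rw [mul_right_comm, ← ofReal_mul, re_ofReal_mul, ← sq, mul_comm m]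
  exact mul_le_mul_of_nonneg_left (hd i) (sq_nonneg _)

lemma norm_realQuadForm_le {E : Matrix ι ι ℂ} {c : ℝ} (hc : 0 ≤ c) (hE : ∀ i j, ‖E i j‖ ≤ c)
    (ξ : ι → ℝ) : ‖E.realQuadForm ξ‖ ≤ Fintype.card ι * c * ∑ i, ξ i ^ 2 := by
  have hentry : ∀ i j, ‖(ξ i : ℂ) * E i j * ξ j‖ ≤ c * (|ξ i| * |ξ j|) := fun i j => by
    rw [norm_mul, norm_mul, norm_real, norm_real, Real.norm_eq_abs, Real.norm_eq_abs]
    calc |ξ i| * ‖E i j‖ * |ξ j| ≤ |ξ i| * c * |ξ j| := by gcongr; exact hE i j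
      _ = c * (|ξ i| * |ξ j|) := by ring
  calc ‖E.realQuadForm ξ‖ ≤ ∑ i, ∑ j, c * (|ξ i| * |ξ j|) :=
        (norm_sum_le _ _).trans <| sum_le_sum fun i _ =>
          (norm_sum_le _ _).trans <| sum_le_sum fun j _ => hentry i j
    _ = c * (∑ i, |ξ i|) ^ 2 := by rw [sq, sum_mul_sum, mul_sum]; simp only [mul_sum]
    _ ≤ c * (Fintype.card ι * ∑ i, ξ i ^ 2) := by
        gcongr
        simpa only [sq_abs, card_univ] using
          sq_sum_le_card_mul_sum_sq (s := univ) (f := fun i => |ξ i|)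
    _ = Fintype.card ι * c * ∑ i, ξ i ^ 2 := by ring

end Matrix

theorem perturbed_symbol_ellipticity_general (n : ℕ) (α : ℝ) (hα : α ∈ Set.Ioo 0 (Real.pi / 4))
    (lam : ℂ) (hlam : ‖lam‖ ≤ Real.sin α) (t : ℝ) (ht : t ∈ Set.Icc (0 : ℝ) 1)
    (D M : Matrix (Fin (n + 1)) (Fin (n + 1)) ℂ)
    (hD : D = Matrix.diagonal (fun i => if i = 0 then ((1 + lam * t) ^ 2)⁻¹ else 1))
    (c : ℝ) (hc : 0 ≤ c)
    (hM : ∀ i j, ‖M i j - D i j‖ ≤ c) :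
    ∀ ξ : Fin (n + 1) → ℝ,
      (∑ i, ∑ j, (ξ i : ℂ) * M i j * (ξ j : ℂ)).re
        ≥ (Real.cos (2 * α) / 4 - ((n : ℝ) + 1) ^ 2 * c) * ∑ i, ξ i ^ 2 := by
  intro ξ
  have hentries : ∀ i : Fin (n + 1), Real.cos (2 * α) / 4 ≤
      (if i = 0 then ((1 + lam * t) ^ 2)⁻¹ else (1 : ℂ)).re := fun i => by
    split_ifs
    · refine Complex.cos_two_mul_div_four_le_re_inv_sq ⟨hα.1.le, hα.2.le⟩ ?_
      rw [add_sub_cancel_left, norm_mul, norm_real, Real.norm_of_nonneg ht.1]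
      exact (mul_le_of_le_one_right (norm_nonneg _) ht.2).trans hlam
    · rw [one_re]; linarith [Real.cos_le_one (2 * α)]
  have hdiag := Matrix.mul_sum_sq_le_re_realQuadForm_diagonal hentries ξ
  have hpert := Matrix.norm_realQuadForm_le hc (E := M - D) hM ξ
  have hcard : (Fintype.card (Fin (n + 1)) : ℝ) * c * ∑ i, ξ i ^ 2
      ≤ ((n : ℝ) + 1) ^ 2 * c * ∑ i, ξ i ^ 2 := by
    rw [Fintype.card_fin, Nat.cast_succ]
    gcongr
    exact le_self_pow₀ (by linarith [n.cast_nonneg (α := ℝ)]) two_ne_zero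
  change (M.realQuadForm ξ).re ≥ _
  rw [Matrix.realQuadForm_sub] at hpert
  rw [← hD] at hdiag
  have hsplit := congrArg re (sub_add_cancel (M.realQuadForm ξ) (D.realQuadForm ξ))
  rw [add_re] at hsplit
  linarith [(abs_le.mp ((abs_re_le_norm _).trans hpert)).1]

theorem perturbed_symbol_ellipticity (n : ℕ) (α : ℝ) (hα : α ∈ Set.Ioo 0 (Real.pi / 4))
    (lam : ℂ) (hlam : ‖lam‖ ≤ Real.sin α) (t : ℝ) (ht : t ∈ Set.Icc (0 : ℝ) 1)
    (D M : Matrix (Fin (n + 1)) (Fin (n + 1)) ℂ)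
    (hD : D = Matrix.diagonal (fun i => if i = 0 then ((1 + lam * t) ^ 2)⁻¹ else 1))
    (c : ℝ) (hc : 0 ≤ c) (hcsmall : ((n : ℝ) + 1) ^ 2 * c < Real.cos (2 * α) / 4)
    (hM : ∀ i j, ‖M i j - D i j‖ ≤ c) :
    ∀ ξ : Fin (n + 1) → ℝ,
      (∑ i, ∑ j, (ξ i : ℂ) * M i j * (ξ j : ℂ)).re
        ≥ (Real.cos (2 * α) / 4 - ((n : ℝ) + 1) ^ 2 * c) * ∑ i, ξ i ^ 2 :=
  perturbed_symbol_ellipticity_general n α hα lam hlam t ht D M hD c hc hM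
end

section
/- Let n ∈ ℕ, α ∈ (0, π/4), σ ∈ (0, π/2 − 2α), λ ∈ ℂ with |λ| ≤ sin α, and t ∈ [0, 1]. Let D be the (n+1)×(n+1) complex diagonal matrix D = diag{(1 + λt)^{−2}, 1, …, 1}, and let W be an (n+1)×(n+1) complex matrix such that max_{i,j} |W_{ij} − D_{ij}| ≤ c, where c ≥ 0 satisfies (n+1)²·c ≤ (cos(2α)/4)·sin σ. Then for every nonzero Z ∈ ℂ^{n+1}, the number q = Σ_{i,j} conj(Z_i)·W_{ij}·Z_j satisfies q ≠ 0 and |arg q| ≤ 2α + σ < π/2. -/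
/-!
Put `u = 1 + λt`. As `‖λt‖ ≤ sin α`, `u` lies in a disc around `1` that is seen from the origin
under the half-angle `α`, so `|arg u| ≤ α` and `‖u‖ ≤ 2`; hence `w = u⁻²` has `|arg w| ≤ 2α` and
`re w ≥ cos (2α) / 4`. The form of `D` is `∑ |Zᵢ|² dᵢ`, a nonnegative combination of points of the
convex sector `|arg| ≤ 2α` whose real part is at least `cos (2α) / 4 · ‖Z‖²`. The form of `W - D`
is at most `(n + 1) c ‖Z‖² ≤ sin σ · cos (2α) / 4 · ‖Z‖²`, and a perturbation of relative size
`sin σ` turns the argument by at most `σ`.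
-/

open Real Complex Finset
open scoped ComplexConjugate

theorem Real.abs_arctan_le_iff {x θ : ℝ} (hθ : θ ∈ Set.Ioo (-(π / 2)) (π / 2)) :
    |arctan x| ≤ θ ↔ |x| ≤ tan θ := by
  rw [abs_le, abs_le, ← arctan_tan hθ.1 hθ.2, arctan_le_arctan_iff, ← arctan_neg,
    arctan_le_arctan_iff, arctan_tan hθ.1 hθ.2]

namespace Complex

theorem arg_eq_arctan_of_re_pos {z : ℂ} (hz : 0 < z.re) : arg z = Real.arctan (z.im / z.re) := by
  have h := abs_lt.1 (abs_arg_lt_pi_div_two_iff.2 (Or.inl hz))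
  rw [← tan_arg, Real.arctan_tan h.1 h.2]

theorem abs_arg_le_iff_abs_im_le_tan_mul_re {z : ℂ} {θ : ℝ} (hθ₀ : 0 ≤ θ) (hθ : θ < π / 2) :
    |arg z| ≤ θ ↔ 0 ≤ z.re ∧ |z.im| ≤ Real.tan θ * z.re := by
  by_cases hz : 0 < z.re
  · rw [arg_eq_arctan_of_re_pos hz, Real.abs_arctan_le_iff ⟨by linarith, hθ⟩, abs_div,
      abs_of_pos hz, div_le_iff₀ hz]
    exact ⟨fun h => ⟨hz.le, h⟩, And.right⟩
  constructor
  · intro h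
    obtain rfl : z = 0 := (abs_arg_lt_pi_div_two_iff.1 (h.trans_lt hθ)).resolve_left hz
    simp
  · rintro ⟨hre, him⟩
    have hre : z.re = 0 := le_antisymm (not_lt.1 hz) hre
    have him : z.im = 0 := abs_nonpos_iff.1 (by simpa [hre] using him)
    obtain rfl : z = 0 := Complex.ext hre him
    simpa using hθ₀

theorem abs_arg_add_le {z w : ℂ} {θ : ℝ} (hθ₀ : 0 ≤ θ) (hθ : θ < π / 2)
    (hz : |arg z| ≤ θ) (hw : |arg w| ≤ θ) : |arg (z + w)| ≤ θ := by
  rw [abs_arg_le_iff_abs_im_le_tan_mul_re hθ₀ hθ] at *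
  refine ⟨add_nonneg hz.1 hw.1, ?_⟩
  rw [add_re, add_im, mul_add]
  exact (abs_add_le _ _).trans (add_le_add hz.2 hw.2)

theorem abs_arg_ofReal_mul_le {z : ℂ} {r θ : ℝ} (hθ₀ : 0 ≤ θ) (hr : 0 ≤ r)
    (hz : |arg z| ≤ θ) : |arg (r * z)| ≤ θ := by
  rcases hr.eq_or_lt with rfl | hr
  · simpa using hθ₀
  · rwa [arg_real_mul z hr]

theorem abs_arg_sum_ofReal_mul_le {ι : Type*} (s : Finset ι) (m : ι → ℝ) (d : ι → ℂ) {θ : ℝ}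
    (hθ₀ : 0 ≤ θ) (hθ : θ < π / 2) (hm : ∀ i, 0 ≤ m i) (hd : ∀ i, |arg (d i)| ≤ θ) :
    |arg (∑ i ∈ s, (m i : ℂ) * d i)| ≤ θ :=
  Finset.sum_induction _ (fun z => |arg z| ≤ θ) (fun _ _ => abs_arg_add_le hθ₀ hθ)
    (by simpa using hθ₀) fun i _ => abs_arg_ofReal_mul_le hθ₀ (hm i) (hd i)

theorem mul_sum_le_re_sum_ofReal_mul {ι : Type*} (s : Finset ι) (m : ι → ℝ) (d : ι → ℂ) {K : ℝ}
    (hm : ∀ i, 0 ≤ m i) (hd : ∀ i, K ≤ (d i).re) :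
    K * ∑ i ∈ s, m i ≤ (∑ i ∈ s, (m i : ℂ) * d i).re := by
  rw [re_sum, Finset.mul_sum]
  refine Finset.sum_le_sum fun i _ => ?_
  rw [re_ofReal_mul, mul_comm]
  exact mul_le_mul_of_nonneg_left (hd i) (hm i)

theorem abs_arg_mul_le {x y : ℂ} (hx : x ≠ 0) (hy : y ≠ 0) (h : |arg x| + |arg y| < π) :
    |arg (x * y)| ≤ |arg x| + |arg y| := by
  rw [arg_mul hx hy ⟨by linarith [neg_abs_le (arg x), neg_abs_le (arg y)],
    by linarith [le_abs_self (arg x), le_abs_self (arg y)]⟩]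
  exact abs_add_le _ _

theorem norm_mul_cos_le_re {z : ℂ} {θ : ℝ} (hz : |arg z| ≤ θ) (hθ : θ ≤ π) :
    ‖z‖ * Real.cos θ ≤ z.re := by
  rw [← norm_mul_cos_arg, ← Real.cos_abs (arg z)]
  exact mul_le_mul_of_nonneg_left (Real.cos_le_cos_of_nonneg_of_le_pi (abs_nonneg _) hθ hz)
    (norm_nonneg z)

section OnePlusSmall

variable {ρ : ℂ} {σ : ℝ}

theorem one_add_ne_zero_of_norm_le_sin (hσ₀ : 0 ≤ σ) (hσ : σ < π / 2)
    (hρ : ‖ρ‖ ≤ Real.sin σ) : 1 + ρ ≠ 0 := by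
  have hσ1 : Real.sin σ < 1 := by
    simpa using Real.sin_lt_sin_of_lt_of_le_pi_div_two (by linarith) le_rfl hσ
  intro h
  rw [← neg_eq_of_add_eq_zero_right h, norm_neg, norm_one] at hρ
  linarith

theorem abs_arg_one_add_le (hσ₀ : 0 ≤ σ) (hσ : σ < π / 2) (hρ : ‖ρ‖ ≤ Real.sin σ) :
    |arg (1 + ρ)| ≤ σ := by
  have hc : 0 < Real.cos σ := Real.cos_pos_of_mem_Ioo ⟨by linarith, hσ⟩
  have hsc := Real.sin_sq_add_cos_sq σ
  have hnormSq : ρ.re ^ 2 + ρ.im ^ 2 ≤ Real.sin σ ^ 2 := by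
    nlinarith [sq_norm_sub_sq_re ρ, norm_nonneg ρ]
  have h1x : 0 ≤ 1 + ρ.re := by
    linarith [neg_abs_le ρ.re, abs_re_le_norm ρ, Real.sin_le_one σ]
  rw [abs_arg_le_iff_abs_im_le_tan_mul_re hσ₀ hσ, Real.tan_eq_sin_div_cos, div_mul_eq_mul_div,
    le_div_iff₀ hc]
  simp only [add_re, one_re, add_im, one_im, zero_add]
  refine ⟨h1x, (pow_le_pow_iff_left₀ (by positivity)
    (mul_nonneg ((norm_nonneg ρ).trans hρ) h1x) two_ne_zero).1 ?_⟩
  rw [mul_pow, sq_abs]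
  -- with `x = re ρ`: `sin² σ (1 + x)² - (sin² σ - x²) cos² σ = (x + sin² σ)²`
  nlinarith [sq_nonneg (ρ.re + Real.sin σ ^ 2)]

theorem abs_arg_add_le_of_norm_le {z r : ℂ} (hz : z ≠ 0) (hσ₀ : 0 ≤ σ) (hσ : σ < π / 2)
    (hr : ‖r‖ ≤ Real.sin σ * ‖z‖) (h : |arg z| + σ < π) :
    z + r ≠ 0 ∧ |arg (z + r)| ≤ |arg z| + σ := by
  have hρ : ‖r / z‖ ≤ Real.sin σ := by
    rwa [norm_div, div_le_iff₀ (norm_pos_iff.2 hz)]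
  have hne := one_add_ne_zero_of_norm_le_sin hσ₀ hσ hρ
  have hargρ := abs_arg_one_add_le hσ₀ hσ hρ
  rw [show z + r = z * (1 + r / z) by field_simp]
  exact ⟨mul_ne_zero hz hne, (abs_arg_mul_le hz hne (by linarith)).trans (by linarith)⟩

theorem abs_arg_inv_one_add_sq_le (hσ₀ : 0 ≤ σ) (hσ : σ < π / 2) (hρ : ‖ρ‖ ≤ Real.sin σ) :
    |arg ((1 + ρ) ^ 2)⁻¹| ≤ 2 * σ := by
  have hne := one_add_ne_zero_of_norm_le_sin hσ₀ hσ hρ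
  have harg := abs_arg_one_add_le hσ₀ hσ hρ
  rw [abs_arg_inv, sq]
  exact (abs_arg_mul_le hne hne (by linarith)).trans (by linarith)

theorem cos_two_mul_div_four_le_re_inv_one_add_sq (hσ₀ : 0 ≤ σ) (hσ : σ ≤ π / 4)
    (hρ : ‖ρ‖ ≤ Real.sin σ) : Real.cos (2 * σ) / 4 ≤ ((1 + ρ) ^ 2)⁻¹.re := by
  have hσ' : σ < π / 2 := by linarith [Real.pi_pos]
  have hnorm : 1 / 4 ≤ ‖((1 + ρ) ^ 2)⁻¹‖ := by
    have hpos : 0 < ‖1 + ρ‖ := norm_pos_iff.2 (one_add_ne_zero_of_norm_le_sin hσ₀ hσ' hρ)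
    have hle : ‖1 + ρ‖ ≤ 2 :=
      (norm_add_le _ _).trans (by linarith [norm_one (α := ℂ), Real.sin_le_one σ])
    rw [norm_inv, norm_pow, one_div]
    exact inv_anti₀ (by positivity) (by nlinarith)
  have hcos : 0 ≤ Real.cos (2 * σ) := Real.cos_nonneg_of_mem_Icc ⟨by linarith, by linarith⟩
  refine le_trans ?_
    (norm_mul_cos_le_re (abs_arg_inv_one_add_sq_le hσ₀ hσ' hρ) (by linarith [Real.pi_pos]))
  linarith [mul_le_mul_of_nonneg_right hnorm hcos]

end OnePlusSmall

end Complex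

section QuadraticForm

variable {ι : Type*} [Fintype ι]

theorem sum_conj_mul_add_mul (A B : Matrix ι ι ℂ) (Z : ι → ℂ) :
    ∑ i, ∑ j, conj (Z i) * (A + B) i j * Z j =
      ∑ i, ∑ j, conj (Z i) * A i j * Z j + ∑ i, ∑ j, conj (Z i) * B i j * Z j := by
  simp only [Matrix.add_apply, mul_add, add_mul, sum_add_distrib]

theorem sum_conj_mul_diagonal_mul [DecidableEq ι] (d : ι → ℂ) (Z : ι → ℂ) :
    ∑ i, ∑ j, conj (Z i) * Matrix.diagonal d i j * Z j = ∑ i, ((‖Z i‖ ^ 2 : ℝ) : ℂ) * d i := by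
  simp only [Matrix.diagonal_apply, mul_ite, ite_mul, mul_zero, zero_mul, sum_ite_eq, mem_univ,
    if_true]
  exact sum_congr rfl fun i _ => by rw [mul_right_comm, conj_mul', ofReal_pow]

theorem norm_sum_conj_mul_mul_le (E : Matrix ι ι ℂ) {c : ℝ} (hc : 0 ≤ c)
    (hE : ∀ i j, ‖E i j‖ ≤ c) (Z : ι → ℂ) :
    ‖∑ i, ∑ j, conj (Z i) * E i j * Z j‖ ≤ c * Fintype.card ι * ∑ i, ‖Z i‖ ^ 2 := by
  calc ‖∑ i, ∑ j, conj (Z i) * E i j * Z j‖ ≤ ∑ i, ∑ j, ‖Z i‖ * c * ‖Z j‖ := by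
        refine (norm_sum_le _ _).trans (sum_le_sum fun i _ => ?_)
        refine (norm_sum_le _ _).trans (sum_le_sum fun j _ => ?_)
        rw [norm_mul, norm_mul, norm_conj]
        gcongr
        exact hE i j
    _ = c * (∑ i, ‖Z i‖) ^ 2 := by
        rw [sq, sum_mul_sum, mul_sum]
        simp only [mul_sum]
        exact sum_congr rfl fun i _ => sum_congr rfl fun j _ => by ring
    _ ≤ c * (Fintype.card ι * ∑ i, ‖Z i‖ ^ 2) := by
        gcongr
        exact sq_sum_le_card_mul_sum_sq
    _ = c * Fintype.card ι * ∑ i, ‖Z i‖ ^ 2 := by ring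

theorem sum_conj_mul_diagonal_add_mul_ne_zero_and_abs_arg_le [DecidableEq ι]
    (d : ι → ℂ) (E : Matrix ι ι ℂ) {θ σ K c : ℝ} (hθ₀ : 0 ≤ θ) (hθ : θ < π / 2)
    (hσ₀ : 0 ≤ σ) (hσ : σ < π / 2) (hK : 0 < K) (hc : 0 ≤ c)
    (hd_arg : ∀ i, |arg (d i)| ≤ θ) (hd_re : ∀ i, K ≤ (d i).re)
    (hE : ∀ i j, ‖E i j‖ ≤ c) (hcK : c * Fintype.card ι ≤ K * Real.sin σ)
    {Z : ι → ℂ} (hZ : Z ≠ 0) :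
    ∑ i, ∑ j, conj (Z i) * (Matrix.diagonal d + E) i j * Z j ≠ 0 ∧
      |arg (∑ i, ∑ j, conj (Z i) * (Matrix.diagonal d + E) i j * Z j)| ≤ θ + σ := by
  set N := ∑ i, ‖Z i‖ ^ 2
  have hN : 0 < N := by
    obtain ⟨i, hi⟩ := Function.ne_iff.1 hZ
    exact sum_pos' (fun j _ => by positivity) ⟨i, mem_univ i, by positivity⟩
  set q₀ := ∑ i, ((‖Z i‖ ^ 2 : ℝ) : ℂ) * d i
  have hq₀_re : K * N ≤ q₀.re :=
    mul_sum_le_re_sum_ofReal_mul _ _ _ (fun i => by positivity) hd_re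
  have hq₀_ne : q₀ ≠ 0 := fun h => by
    rw [h, zero_re] at hq₀_re
    nlinarith
  have hq₀_arg : |arg q₀| ≤ θ :=
    abs_arg_sum_ofReal_mul_le _ _ _ hθ₀ hθ (fun i => by positivity) hd_arg
  have hr : ‖∑ i, ∑ j, conj (Z i) * E i j * Z j‖ ≤ Real.sin σ * ‖q₀‖ := by
    have hsin : 0 ≤ Real.sin σ := Real.sin_nonneg_of_nonneg_of_le_pi hσ₀ (by linarith)
    calc _ ≤ c * Fintype.card ι * N := norm_sum_conj_mul_mul_le E hc hE Z
      _ ≤ Real.sin σ * (K * N) := by nlinarith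
      _ ≤ Real.sin σ * ‖q₀‖ :=
          mul_le_mul_of_nonneg_left (hq₀_re.trans (re_le_norm q₀)) hsin
  rw [sum_conj_mul_add_mul, sum_conj_mul_diagonal_mul]
  obtain ⟨hne, harg⟩ := abs_arg_add_le_of_norm_le hq₀_ne hσ₀ hσ hr (by linarith)
  exact ⟨hne, harg.trans (by linarith)⟩

end QuadraticForm

theorem perturbed_numerical_range (n : ℕ) (α σ : ℝ) (hα : α ∈ Set.Ioo 0 (Real.pi / 4))
    (hσ : σ ∈ Set.Ioo 0 (Real.pi / 2 - 2 * α))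
    (lam : ℂ) (hlam : ‖lam‖ ≤ Real.sin α) (t : ℝ) (ht : t ∈ Set.Icc (0 : ℝ) 1)
    (D W : Matrix (Fin (n + 1)) (Fin (n + 1)) ℂ)
    (hD : D = Matrix.diagonal (fun i => if i = 0 then ((1 + lam * t) ^ 2)⁻¹ else 1))
    (c : ℝ) (hc : 0 ≤ c)
    (hcsmall : ((n : ℝ) + 1) ^ 2 * c ≤ (Real.cos (2 * α) / 4) * Real.sin σ)
    (hW : ∀ i j, ‖W i j - D i j‖ ≤ c) :
    ∀ Z : Fin (n + 1) → ℂ, Z ≠ 0 →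
      (∑ i, ∑ j, (starRingEnd ℂ) (Z i) * W i j * Z j) ≠ 0 ∧
      |Complex.arg (∑ i, ∑ j, (starRingEnd ℂ) (Z i) * W i j * Z j)| ≤ 2 * α + σ ∧
      2 * α + σ < Real.pi / 2 := by
  intro Z hZ
  obtain ⟨hα₀, hα⟩ := hα
  obtain ⟨hσ₀, hσ⟩ := hσ
  have hρ : ‖lam * t‖ ≤ Real.sin α := by
    rw [norm_mul, norm_real, Real.norm_of_nonneg ht.1]
    exact (mul_le_of_le_one_right (norm_nonneg _) ht.2).trans hlam
  set d : Fin (n + 1) → ℂ := fun i => if i = 0 then ((1 + lam * t) ^ 2)⁻¹ else 1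
  have hd_arg : ∀ i, |arg (d i)| ≤ 2 * α := fun i => by
    by_cases hi : i = 0
    · simpa [d, hi] using abs_arg_inv_one_add_sq_le hα₀.le (by linarith) hρ
    · simpa [d, hi] using hα₀.le
  have hd_re : ∀ i, Real.cos (2 * α) / 4 ≤ (d i).re := fun i => by
    by_cases hi : i = 0
    · simpa [d, hi] using cos_two_mul_div_four_le_re_inv_one_add_sq hα₀.le hα.le hρ
    · simp only [d, hi, if_false, one_re]
      linarith [Real.cos_le_one (2 * α)]
  have hK : 0 < Real.cos (2 * α) / 4 :=
    div_pos (Real.cos_pos_of_mem_Ioo ⟨by linarith, by linarith⟩) four_pos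
  have hcK : c * Fintype.card (Fin (n + 1)) ≤ Real.cos (2 * α) / 4 * Real.sin σ := by
    have hn : (1 : ℝ) ≤ n + 1 := by linarith [n.cast_nonneg (α := ℝ)]
    rw [Fintype.card_fin, Nat.cast_succ, mul_comm]
    exact (mul_le_mul_of_nonneg_right (le_self_pow₀ hn two_ne_zero) hc).trans hcsmall
  have hform := sum_conj_mul_diagonal_add_mul_ne_zero_and_abs_arg_le d (W - D)
    (by linarith) (by linarith) hσ₀.le (by linarith) hK hc hd_arg hd_re hW hcK hZ
  rw [← hD, add_sub_cancel] at hform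
  exact ⟨hform.1, hform.2, by linarith⟩
end
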